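/- arXiv:2004.01983 — 2 statements merged into one kernel-verified Lean document; each statement's English description precedes it below -/
import Mathlib

section
/- For every k > 0 and every Q ∈ SO(3), b ∈ ℝ³, t ∈ S², λ > 0, 0 < r < R ≤ h, one has the scaling identity Ψ_λ^{nl}(Q, b, t, k·h, k·r, k·R) = Ψ_λ^{nl}(Q, b, t, h, r, R). -/
open MeasureTheory Filter Set
open scoped Topology

noncomputable section

abbrev V3 := Fin 3 → ℝ
abbrev Mat3 := Fin 3 → Fin 3 → ℝ

def vnorm (v : V3) : ℝ := Real.sqrt (∑ i, (v i) ^ 2)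
def mnorm (A : Mat3) : ℝ := Real.sqrt (∑ i, ∑ j, (A i j) ^ 2)
def vdot (u v : V3) : ℝ := ∑ i, u i * v i
def minner (A B : Mat3) : ℝ := ∑ i, ∑ j, A i j * B i j
def mvmul (A : Mat3) (v : V3) : V3 := fun i => ∑ j, A i j * v j
def mmul (A B : Mat3) : Mat3 := fun i k => ∑ j, A i j * B j k
def mtrans (A : Mat3) : Mat3 := fun i j => A j i
def idM : Mat3 := fun i j => if i = j then 1 else 0
def outer (u v : V3) : Mat3 := fun i j => u i * v j

def SO3 : Set Mat3 := {Q | mmul (mtrans Q) Q = idM ∧ (Matrix.of Q).det = 1}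

def distSO3 (F : Mat3) : ℝ := sInf {d | ∃ Q ∈ SO3, d = mnorm (F - Q)}
def sdist (x : V3) (A : Set V3) : ℝ := sInf {d | ∃ a ∈ A, d = vnorm (x - a)}
def setDist (A B : Set V3) : ℝ := sInf {d | ∃ a ∈ A, ∃ b ∈ B, d = vnorm (a - b)}

def esing (i : Fin 3) : V3 := Pi.single i 1

def gradM (u : V3 → V3) (x : V3) : Mat3 := fun i j => fderiv ℝ u x (esing j) i

def curl3 (ψ : V3 → V3) (x : V3) : V3 := fun i =>
  fderiv ℝ ψ x (esing (i + 1)) (i + 2) - fderiv ℝ ψ x (esing (i + 2)) (i + 1)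

def CurlFreeOn (β : V3 → Mat3) (U : Set V3) : Prop :=
  ∀ ψ : V3 → V3, ContDiff ℝ (⊤ : ℕ∞) ψ → HasCompactSupport ψ → tsupport ψ ⊆ U →
    ∀ i : Fin 3, (∫ x : V3, ∑ j, β x i j * curl3 ψ x j) = 0

def CurlEqOn (β g : V3 → Mat3) (U : Set V3) : Prop :=
  ∀ ψ : V3 → V3, ContDiff ℝ (⊤ : ℕ∞) ψ → HasCompactSupport ψ → tsupport ψ ⊆ U →
    ∀ i : Fin 3, (∫ x : V3, ∑ j, β x i j * curl3 ψ x j) = ∫ x : V3, ∑ j, g x i j * ψ x j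

def DivFreeField (η : V3 → Mat3) : Prop :=
  ∀ φ : V3 → ℝ, ContDiff ℝ (⊤ : ℕ∞) φ → HasCompactSupport φ →
    ∀ i : Fin 3, (∫ x : V3, ∑ j, η x i j * fderiv ℝ φ x (esing j)) = 0

def L2On (β : V3 → Mat3) (U : Set V3) : Prop :=
  Integrable (fun x => mnorm (β x) ^ 2) (volume.restrict U)

def cylAnn (r R h : ℝ) : Set V3 :=
  {x | r ^ 2 < (x 0) ^ 2 + (x 1) ^ 2 ∧ (x 0) ^ 2 + (x 1) ^ 2 < R ^ 2 ∧ x 2 ∈ Set.Ioo 0 h}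

def Thr (Qt : Mat3) (r R h : ℝ) : Set V3 := (fun x => mvmul Qt x) '' cylAnn r R h

def e3 : V3 := ![0, 0, 1]
def eθ (θ : ℝ) : V3 := ![-Real.sin θ, Real.cos θ, 0]
def er (θ : ℝ) : V3 := ![Real.cos θ, Real.sin θ, 0]

def Φt (Qt : Mat3) (ρ θ z : ℝ) : V3 := mvmul Qt ![ρ * Real.cos θ, ρ * Real.sin θ, z]

def Circulation (β : V3 → Mat3) (Qt : Mat3) (r R h : ℝ) (c : V3) : Prop :=
  ∀ ρ ∈ Set.Ioo r R, ∀ z ∈ Set.Ioo 0 h,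
    (∫ θ in (0:ℝ)..(2 * Real.pi), ρ • mvmul (β (Φt Qt ρ θ z)) (mvmul Qt (eθ θ))) = c

def cellVals (W : Mat3 → ℝ) (Q Qt : Mat3) (b : V3) (lam h r R : ℝ) : Set ℝ :=
  {E | ∃ β : V3 → Mat3, L2On β (Thr Qt r R h) ∧ CurlFreeOn β (Thr Qt r R h) ∧
      Circulation β Qt r R h (r • b) ∧
      E = ∫ x in Thr Qt r R h, (W (β x) + lam * (mnorm (β x - Q)) ^ 2)}

def Ψnl (W : Mat3 → ℝ) (Q Qt : Mat3) (b : V3) (lam h r R : ℝ) : ℝ :=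
  (1 / (h * r ^ 2 * Real.log (R / r))) * sInf (cellVals W Q Qt b lam h r R)

def hessW (W : Mat3 → ℝ) (F G : Mat3) : ℝ := iteratedFDeriv ℝ 2 W idM ![F, G]

def FrameIndiff (W : Mat3 → ℝ) : Prop := ∀ R ∈ SO3, ∀ F, W (mmul R F) = W F
def QuadGrowth (W : Mat3 → ℝ) (C₁ C₂ : ℝ) : Prop :=
  ∀ F, C₁ * distSO3 F ^ 2 ≤ W F ∧ W F ≤ C₂ * distSO3 F ^ 2

def Psi0Q (Cb : Mat3 → Mat3 → ℝ) (Qt : Mat3) (b : V3) : ℝ :=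
  sInf {E | ∃ f : ℝ → V3, ∃ g : V3,
    Integrable (fun θ => vnorm (f θ) ^ 2) (volume.restrict (Set.Ioo 0 (2 * Real.pi))) ∧
    (∫ θ in (0:ℝ)..(2 * Real.pi), f θ) = b ∧
    E = ∫ θ in (0:ℝ)..(2 * Real.pi),
      (1 / 2) * Cb (outer (f θ) (mvmul Qt e3) + outer g (mvmul Qt (er θ)))
        (outer (f θ) (mvmul Qt e3) + outer g (mvmul Qt (er θ)))}

def Psi0 (Cb : Mat3 → Mat3 → ℝ) (b t : V3) : ℝ :=
  sInf {E | ∃ Qt ∈ SO3, mvmul Qt e3 = t ∧ E = Psi0Q Cb Qt b}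

def segSet (p q : V3) : Set V3 := segment ℝ p q
def segInt (p q : V3) (f : V3 → ℝ) : ℝ := vnorm (q - p) * ∫ s in (0:ℝ)..1, f (p + s • (q - p))
def tangent (p q : V3) : V3 := (vnorm (q - p))⁻¹ • (q - p)

def DivFreePoly {n : ℕ} (bb p q : Fin n → V3) (U : Set V3) : Prop :=
  ∀ φ : V3 → V3, ContDiff ℝ (⊤ : ℕ∞) φ → HasCompactSupport φ → tsupport φ ⊆ U →
    (∑ k, segInt (p k) (q k) (fun x => vdot (bb k) (fderiv ℝ φ x (tangent (p k) (q k))))) = 0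

def CurlEqPoly {n : ℕ} (η : V3 → Mat3) (bb p q : Fin n → V3) : Prop :=
  ∀ ψ : V3 → V3, ContDiff ℝ (⊤ : ℕ∞) ψ → HasCompactSupport ψ →
    ∀ i : Fin 3, (∫ x : V3, ∑ j, η x i j * curl3 ψ x j)
      = ∑ k, bb k i * segInt (p k) (q k) (fun y => vdot (ψ y) (tangent (p k) (q k)))

def polyPair {n : ℕ} (bb p q : Fin n → V3) (A : V3 → Mat3) : ℝ :=
  ∑ k, segInt (p k) (q k) (fun y => ∑ i, ∑ j, A y i j * (bb k i * tangent (p k) (q k) j))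

def linePair (b' t : V3) (A : V3 → Mat3) : ℝ :=
  ∫ s in (-(1:ℝ)/2)..(1/2), ∑ i, ∑ j, A (s • t) i j * (b' i * t j)

def ballE (ρ : ℝ) : Set V3 := {x | vnorm x < ρ}

def RelaxedVals (Blat : Set V3) (Ψ : V3 → V3 → ℝ) (b' t : V3) : Set ℝ :=
  {E | ∃ n : ℕ, ∃ bb p q : Fin n → V3,
    (∀ k, bb k ∈ Blat) ∧ (∀ k, p k ≠ q k) ∧
    (∀ k, segSet (p k) (q k) ⊆ ballE (1/2)) ∧
    DivFreePoly bb p q (ballE (1/2)) ∧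
    (∃ ρ, 0 < ρ ∧ ρ < 1/2 ∧ ∀ A : V3 → Mat3, Continuous A →
      (∀ x, vnorm x ≤ ρ → A x = 0) → polyPair bb p q A = linePair b' t A) ∧
    E = ∑ k, vnorm (q k - p k) * Ψ (bb k) (tangent (p k) (q k))}

def RelaxedPsi (Blat : Set V3) (Ψ : V3 → V3 → ℝ) (b' t : V3) : ℝ :=
  sInf (RelaxedVals Blat Ψ b' t)

def mollDensity {n : ℕ} (eps : ℝ) (φ : V3 → ℝ) (bb p q : Fin n → V3) (x : V3) : Mat3 :=
  ∑ k, (segInt (p k) (q k) (fun y => eps⁻¹ ^ 3 * φ (eps⁻¹ • (x - y)))) •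
    outer (bb k) (tangent (p k) (q k))

open scoped Pointwise

namespace Stmt2Aux

lemma mvmul_smul (A : Mat3) (c : ℝ) (v : V3) : mvmul A (c • v) = c • mvmul A v := by
  funext i
  simp only [mvmul, Pi.smul_apply, smul_eq_mul, Fin.sum_univ_three]
  ring

lemma mvmul_mvmul (A B : Mat3) (x : V3) : mvmul A (mvmul B x) = mvmul (mmul A B) x := by
  funext i
  simp only [mvmul, mmul, Fin.sum_univ_three]
  ring

lemma mvmul_idM (x : V3) : mvmul idM x = x := by
  funext i
  fin_cases i <;> simp [mvmul, idM, Fin.sum_univ_three]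

lemma mmul_eq (A B : Mat3) : mmul A B = (Matrix.of A * Matrix.of B : Matrix (Fin 3) (Fin 3) ℝ) := by
  funext i j
  simp [mmul, Matrix.mul_apply]

lemma idM_eq : idM = (1 : Matrix (Fin 3) (Fin 3) ℝ) := by
  funext i j
  simp [idM, Matrix.one_apply]

lemma SO3_right {Qt : Mat3} (hQt : Qt ∈ SO3) : mmul Qt (mtrans Qt) = idM := by
  have h1 : (Matrix.of (mtrans Qt) * Matrix.of Qt : Matrix (Fin 3) (Fin 3) ℝ) = 1 := by
    rw [← mmul_eq, hQt.1, idM_eq]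
  have h2 : (Matrix.of Qt * Matrix.of (mtrans Qt) : Matrix (Fin 3) (Fin 3) ℝ) = 1 :=
    mul_eq_one_comm.mp h1
  rw [mmul_eq, idM_eq, h2]

lemma mvmul_trans_mvmul {Qt : Mat3} (hQt : Qt ∈ SO3) (x : V3) :
    mvmul (mtrans Qt) (mvmul Qt x) = x := by
  rw [mvmul_mvmul, hQt.1, mvmul_idM]

lemma mvmul_mvmul_trans {Qt : Mat3} (hQt : Qt ∈ SO3) (x : V3) :
    mvmul Qt (mvmul (mtrans Qt) x) = x := by
  rw [mvmul_mvmul, SO3_right hQt, mvmul_idM]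

lemma Thr_eq_preimage {Qt : Mat3} (hQt : Qt ∈ SO3) (r R h : ℝ) :
    Thr Qt r R h = (fun y => mvmul (mtrans Qt) y) ⁻¹' cylAnn r R h := by
  ext y
  constructor
  · rintro ⟨x, hx, rfl⟩
    simpa [Set.mem_preimage, mvmul_trans_mvmul hQt] using hx
  · intro hy
    exact ⟨_, hy, mvmul_mvmul_trans hQt y⟩

lemma continuous_mvmul (A : Mat3) : Continuous (fun x : V3 => mvmul A x) := by
  apply continuous_pi
  intro i
  simp only [mvmul, Fin.sum_univ_three]
  fun_prop

lemma measurable_cylAnn (r R h : ℝ) : MeasurableSet (cylAnn r R h) := by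
  have h1 : Continuous (fun x : V3 => (x 0) ^ 2 + (x 1) ^ 2) := by fun_prop
  have h2 : Continuous (fun x : V3 => x 2) := by fun_prop
  have : cylAnn r R h
      = ((fun x : V3 => (x 0) ^ 2 + (x 1) ^ 2) ⁻¹' Set.Ioo (r ^ 2) (R ^ 2))
        ∩ ((fun x : V3 => x 2) ⁻¹' Set.Ioo 0 h) := by
    ext x
    simp [cylAnn, Set.mem_Ioo]
    tauto
  rw [this]
  exact (measurableSet_Ioo.preimage h1.measurable).inter
    (measurableSet_Ioo.preimage h2.measurable)

lemma measurable_Thr {Qt : Mat3} (hQt : Qt ∈ SO3) (r R h : ℝ) :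
    MeasurableSet (Thr Qt r R h) := by
  rw [Thr_eq_preimage hQt]
  exact (measurable_cylAnn r R h).preimage (continuous_mvmul _).measurable

end Stmt2Aux

namespace Stmt2Aux

lemma mem_cylAnn_smul {k : ℝ} (hk : 0 < k) (r R h : ℝ) (y : V3) :
    y ∈ cylAnn r R h ↔ k • y ∈ cylAnn (k * r) (k * R) (k * h) := by
  have hy : ∀ i : Fin 3, (k • y) i = k * y i := fun i => rfl
  have hk2 : (0:ℝ) < k ^ 2 := by positivity
  simp only [cylAnn, Set.mem_setOf_eq, hy, Set.mem_Ioo]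
  constructor
  · rintro ⟨h1, h2, h3, h4⟩
    refine ⟨by nlinarith [h1], by nlinarith [h2], by nlinarith [h3], by nlinarith [h4]⟩
  · rintro ⟨h1, h2, h3, h4⟩
    refine ⟨?_, ?_, ?_, ?_⟩
    · have : k ^ 2 * r ^ 2 < k ^ 2 * (y 0 ^ 2 + y 1 ^ 2) := by nlinarith [h1]
      exact lt_of_mul_lt_mul_left this hk2.le
    · have : k ^ 2 * (y 0 ^ 2 + y 1 ^ 2) < k ^ 2 * R ^ 2 := by nlinarith [h2]
      exact lt_of_mul_lt_mul_left this hk2.le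
    · have : k * 0 < k * y 2 := by nlinarith [h3]
      exact lt_of_mul_lt_mul_left this hk.le
    · have : k * y 2 < k * h := by nlinarith [h4]
      exact lt_of_mul_lt_mul_left this hk.le

lemma cylAnn_smul {k : ℝ} (hk : 0 < k) (r R h : ℝ) :
    cylAnn (k * r) (k * R) (k * h) = k • cylAnn r R h := by
  ext x
  constructor
  · intro hx
    refine ⟨k⁻¹ • x, ?_, smul_inv_smul₀ hk.ne' x⟩
    have := (mem_cylAnn_smul (inv_pos.2 hk) (k * r) (k * R) (k * h) x).1 hx
    rwa [inv_mul_cancel_left₀ hk.ne', inv_mul_cancel_left₀ hk.ne',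
      inv_mul_cancel_left₀ hk.ne'] at this
  · rintro ⟨y, hy, rfl⟩
    exact (mem_cylAnn_smul hk r R h y).1 hy

lemma Thr_smul {Qt : Mat3} {k : ℝ} (hk : 0 < k) (r R h : ℝ) :
    Thr Qt (k * r) (k * R) (k * h) = k • Thr Qt r R h := by
  unfold Thr
  rw [cylAnn_smul hk, ← Set.image_smul, ← Set.image_smul, Set.image_image, Set.image_image]
  simp only [mvmul_smul]

lemma finrank_V3 : Module.finrank ℝ V3 = 3 := Module.finrank_fin_fun ℝ

lemma int_scale {k : ℝ} (hk : 0 < k) (U : Set V3) (f : V3 → ℝ) :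
    ∫ x in k • U, f (k⁻¹ • x) = k ^ 3 * ∫ x in U, f x := by
  have h1 := MeasureTheory.Measure.setIntegral_comp_smul_of_pos
    (volume : MeasureTheory.Measure V3) (fun y => f (k⁻¹ • y)) U hk
  simp only [inv_smul_smul₀ hk.ne', finrank_V3, smul_eq_mul] at h1
  rw [h1]
  field_simp

lemma smul_set_measurable {k : ℝ} (hk : 0 < k) {U : Set V3} (hU : MeasurableSet U) :
    MeasurableSet (k • U) := by
  have : k • U = (fun x : V3 => k⁻¹ • x) ⁻¹' U := by
    ext x
    exact Set.mem_smul_set_iff_inv_smul_mem₀ hk.ne' _ _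
  rw [this]
  exact hU.preimage (continuous_const_smul _).measurable

lemma integrableOn_scale {k : ℝ} (hk : 0 < k) {U : Set V3} (hU : MeasurableSet U)
    (f : V3 → ℝ) (hf : MeasureTheory.Integrable f (MeasureTheory.volume.restrict U)) :
    MeasureTheory.Integrable (fun x => f (k⁻¹ • x))
      (MeasureTheory.volume.restrict (k • U)) := by
  have h1 : MeasureTheory.Integrable (U.indicator f) volume :=
    (MeasureTheory.integrable_indicator_iff hU).2 hf
  have h2 : MeasureTheory.Integrable (fun x => U.indicator f (k⁻¹ • x)) volume :=
    (MeasureTheory.integrable_comp_smul_iff volume (U.indicator f)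
      (inv_ne_zero hk.ne')).2 h1
  have h3 : (fun x => U.indicator f (k⁻¹ • x))
      = (k • U).indicator (fun x => f (k⁻¹ • x)) := by
    funext x
    by_cases hx : x ∈ k • U
    · rw [Set.indicator_of_mem hx, Set.indicator_of_mem
        ((Set.mem_smul_set_iff_inv_smul_mem₀ hk.ne' _ _).1 hx)]
    · rw [Set.indicator_of_notMem hx, Set.indicator_of_notMem
        (fun hc => hx ((Set.mem_smul_set_iff_inv_smul_mem₀ hk.ne' _ _).2 hc))]
  rw [h3] at h2
  exact (MeasureTheory.integrable_indicator_iff (smul_set_measurable hk hU)).1 h2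

lemma curl3_comp_smul {ψ : V3 → V3} (hψ : ContDiff ℝ (⊤ : ℕ∞) ψ) (k : ℝ) (y : V3) (j : Fin 3) :
    curl3 (fun x => ψ (k • x)) y j = k * curl3 ψ (k • y) j := by
  have hd : ∀ v : V3, fderiv ℝ (fun x => ψ (k • x)) y v = k • fderiv ℝ ψ (k • y) v := by
    intro v
    have hL : HasFDerivAt (fun x : V3 => k • x)
        (k • ContinuousLinearMap.id ℝ V3) y := by
      simpa using (k • ContinuousLinearMap.id ℝ V3).hasFDerivAt (x := y)
    have h1 : HasFDerivAt ψ (fderiv ℝ ψ (k • y)) (k • y) :=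
      (hψ.differentiable (by simp) (k • y)).hasFDerivAt
    have h2 : HasFDerivAt (fun x => ψ (k • x))
        ((fderiv ℝ ψ (k • y)).comp (k • ContinuousLinearMap.id ℝ V3)) y := h1.comp y hL
    rw [h2.fderiv]
    simp
  simp only [curl3, hd, Pi.smul_apply, smul_eq_mul]
  ring

end Stmt2Aux

namespace Stmt2Aux

lemma cellVals_scale (W : Mat3 → ℝ) (Q Qt : Mat3) (hQt : Qt ∈ SO3) (b : V3) (lam : ℝ)
    {k : ℝ} (hk : 0 < k) (h r R : ℝ) {E : ℝ}
    (hE : E ∈ cellVals W Q Qt b lam h r R) :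
    k ^ 3 * E ∈ cellVals W Q Qt b lam (k * h) (k * r) (k * R) := by
  obtain ⟨β, hL2, hcf, hcirc, rfl⟩ := hE
  refine ⟨fun x => β (k⁻¹ • x), ?_, ?_, ?_, ?_⟩
  · -- L2On
    show MeasureTheory.Integrable _ _
    rw [Thr_smul hk]
    exact integrableOn_scale hk (measurable_Thr hQt r R h)
      (fun x => mnorm (β x) ^ 2) hL2
  · -- CurlFreeOn
    rw [Thr_smul hk]
    intro ψ hψ hsupp htsupp i
    set ψ' : V3 → V3 := fun y => ψ (k • y) with hψ'def
    have hψ'c : ContDiff ℝ (⊤ : ℕ∞) ψ' := hψ.comp (contDiff_const_smul k)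
    have hψ's : HasCompactSupport ψ' := hsupp.comp_smul hk.ne'
    have hψ't : tsupport ψ' ⊆ Thr Qt r R h := by
      intro x hx
      have h1 : tsupport ψ' ⊆ (fun y : V3 => k • y) ⁻¹' tsupport ψ := by
        apply closure_minimal ?_ (isClosed_closure.preimage (continuous_const_smul k))
        intro x hx
        exact subset_closure hx
      have h2 := htsupp (h1 hx)
      rwa [Set.smul_mem_smul_set_iff₀ hk.ne'] at h2
    have key := hcf ψ' hψ'c hψ's hψ't i
    have hcurl : ∀ y j, curl3 ψ' y j = k * curl3 ψ (k • y) j := curl3_comp_smul hψ k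
    have comp_eq : (fun x => ∑ j, β (k⁻¹ • x) i j * curl3 ψ x j)
        = fun x => (fun y => ∑ j, β y i j * curl3 ψ (k • y) j) (k⁻¹ • x) := by
      funext x
      simp [smul_inv_smul₀ hk.ne']
    show (∫ x : V3, ∑ j, β (k⁻¹ • x) i j * curl3 ψ x j) = 0
    rw [comp_eq, MeasureTheory.Measure.integral_comp_inv_smul volume
      (fun y => ∑ j, β y i j * curl3 ψ (k • y) j) k]
    have hfun : (fun y => ∑ j, β y i j * curl3 ψ (k • y) j)
        = fun y => k⁻¹ * ∑ j, β y i j * curl3 ψ' y j := by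
      funext y
      rw [Finset.mul_sum]
      congr 1
      funext j
      rw [hcurl]
      field_simp
    rw [hfun, MeasureTheory.integral_const_mul, key]
    simp
  · -- Circulation
    intro ρ hρ z hz
    have hρ' : k⁻¹ * ρ ∈ Set.Ioo r R := by
      constructor
      · have := hρ.1
        calc r = k⁻¹ * (k * r) := by field_simp
        _ < k⁻¹ * ρ := by
            exact mul_lt_mul_of_pos_left this (inv_pos.2 hk)
      · have := hρ.2
        calc k⁻¹ * ρ < k⁻¹ * (k * R) := mul_lt_mul_of_pos_left this (inv_pos.2 hk)
        _ = R := by field_simp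
    have hz' : k⁻¹ * z ∈ Set.Ioo 0 h := by
      constructor
      · exact mul_pos (inv_pos.2 hk) hz.1
      · calc k⁻¹ * z < k⁻¹ * (k * h) := mul_lt_mul_of_pos_left hz.2 (inv_pos.2 hk)
        _ = h := by field_simp
    have key := hcirc _ hρ' _ hz'
    have hΦ : ∀ θ : ℝ, k⁻¹ • Φt Qt ρ θ z = Φt Qt (k⁻¹ * ρ) θ (k⁻¹ * z) := by
      intro θ
      unfold Φt
      rw [← mvmul_smul]
      funext i
      fin_cases i <;> simp [Pi.smul_apply, smul_eq_mul] <;> ring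
    have heq : (fun θ => ρ • mvmul (β (k⁻¹ • Φt Qt ρ θ z)) (mvmul Qt (eθ θ)))
        = fun θ => k • ((k⁻¹ * ρ) • mvmul (β (Φt Qt (k⁻¹ * ρ) θ (k⁻¹ * z))) (mvmul Qt (eθ θ))) := by
      funext θ
      rw [hΦ, smul_smul]
      congr 1
      field_simp
    show (∫ θ in (0:ℝ)..(2 * Real.pi),
        ρ • mvmul (β (k⁻¹ • Φt Qt ρ θ z)) (mvmul Qt (eθ θ))) = (k * r) • b
    rw [heq, intervalIntegral.integral_smul, key, smul_smul]
  · -- energy value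
    rw [Thr_smul hk]
    exact (int_scale hk (Thr Qt r R h)
      (fun x => W (β x) + lam * mnorm (β x - Q) ^ 2)).symm

end Stmt2Aux

theorem stmt2 (W : Mat3 → ℝ) (C₁ C₂ : ℝ) (hC₁ : 0 < C₁) (hC₂ : 0 < C₂)
    (hfi : FrameIndiff W) (hgrowth : QuadGrowth W C₁ C₂)
    (k : ℝ) (hk : 0 < k)
    (Q : Mat3) (hQ : Q ∈ SO3) (Qt : Mat3) (hQt : Qt ∈ SO3)
    (b : V3) (lam : ℝ) (hlam : 0 < lam)
    (h r R : ℝ) (hr : 0 < r) (hrR : r < R) (hRh : R ≤ h) :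
    Ψnl W Q Qt b lam (k * h) (k * r) (k * R) = Ψnl W Q Qt b lam h r R := by
  have himg : cellVals W Q Qt b lam (k * h) (k * r) (k * R)
      = (k ^ 3 : ℝ) • cellVals W Q Qt b lam h r R := by
    apply Set.Subset.antisymm
    · intro E hE
      have h1 := Stmt2Aux.cellVals_scale W Q Qt hQt b lam (inv_pos.2 hk)
        (k * h) (k * r) (k * R) hE
      rw [inv_mul_cancel_left₀ hk.ne', inv_mul_cancel_left₀ hk.ne',
        inv_mul_cancel_left₀ hk.ne'] at h1
      refine ⟨k⁻¹ ^ 3 * E, h1, ?_⟩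
      simp only [smul_eq_mul]
      field_simp
    · rintro x ⟨E, hE, rfl⟩
      have := Stmt2Aux.cellVals_scale W Q Qt hQt b lam hk h r R hE
      simpa [smul_eq_mul] using this
  unfold Ψnl
  rw [himg, Real.sInf_smul_of_nonneg (by positivity : (0:ℝ) ≤ k ^ 3), smul_eq_mul,
    mul_div_mul_left R r hk.ne']
  have hX : k * h * (k * r) ^ 2 * Real.log (R / r)
      = k ^ 3 * (h * r ^ 2 * Real.log (R / r)) := by ring
  rw [hX, one_div, mul_inv, mul_mul_mul_comm, inv_mul_cancel₀ (pow_ne_zero 3 hk.ne'),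
    one_mul, one_div]
end
end

section
/- (Continuity of the self-energy in the direction) There exists c > 0 such that for all b ∈ ℝ³ and all t, t' ∈ S²: Ψ₀(b, t) ≤ (1 + c|t − t'|) Ψ₀(b, t'). -/
open MeasureTheory Filter Set
open scoped Topology

noncomputable section

lemma vnorm_nonneg (v : V3) : 0 ≤ vnorm v := Real.sqrt_nonneg _
lemma mnorm_nonneg (A : Mat3) : 0 ≤ mnorm A := Real.sqrt_nonneg _
lemma vnorm_sq (v : V3) : vnorm v ^ 2 = ∑ i, (v i) ^ 2 := by
  rw [vnorm, Real.sq_sqrt]; positivity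
lemma mnorm_sq (A : Mat3) : mnorm A ^ 2 = ∑ i, ∑ j, (A i j) ^ 2 := by
  rw [mnorm, Real.sq_sqrt]; positivity

lemma orth_entry {Q : Mat3} (h : mmul (mtrans Q) Q = idM) (a b : Fin 3) :
    Q 0 a * Q 0 b + Q 1 a * Q 1 b + Q 2 a * Q 2 b = if a = b then 1 else 0 := by
  have := congrFun (congrFun h a) b
  simpa [mmul, mtrans, idM, Fin.sum_univ_three] using this

lemma orth_diag {Q : Mat3} (h : mmul (mtrans Q) Q = idM) (a : Fin 3) :
    Q 0 a * Q 0 a + Q 1 a * Q 1 a + Q 2 a * Q 2 a = 1 := by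
  simpa using orth_entry h a a

lemma orth_off {Q : Mat3} (h : mmul (mtrans Q) Q = idM) (a b : Fin 3) (hab : a ≠ b) :
    Q 0 a * Q 0 b + Q 1 a * Q 1 b + Q 2 a * Q 2 b = 0 := by
  simpa [hab] using orth_entry h a b

lemma SO3_mul_mem {Q R : Mat3} (hQ : Q ∈ SO3) (hR : R ∈ SO3) : mmul Q R ∈ SO3 := by
  obtain ⟨hQ1, hQ2⟩ := hQ; obtain ⟨hR1, hR2⟩ := hR
  constructor
  · funext a b
    have q00 := orth_diag hQ1 0
    have q11 := orth_diag hQ1 1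
    have q22 := orth_diag hQ1 2
    have q01 := orth_off hQ1 0 1 (by decide)
    have q02 := orth_off hQ1 0 2 (by decide)
    have q12 := orth_off hQ1 1 2 (by decide)
    have hrab := orth_entry hR1 a b
    simp only [mmul, mtrans, idM, Fin.sum_univ_three]
    linear_combination (R 0 a * R 0 b) * q00 + (R 1 a * R 1 b) * q11 + (R 2 a * R 2 b) * q22
      + (R 0 a * R 1 b + R 1 a * R 0 b) * q01 + (R 0 a * R 2 b + R 2 a * R 0 b) * q02
      + (R 1 a * R 2 b + R 2 a * R 1 b) * q12 + hrab
  · have : (Matrix.of (mmul Q R)) = (Matrix.of Q) * (Matrix.of R) := by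
      funext i k; simp [mmul, Matrix.mul_apply]
    rw [this, Matrix.det_mul, hQ2, hR2, one_mul]

-- |Qv|^2 = |v|^2
lemma mvmul_norm_sq {Q : Mat3} (h : mmul (mtrans Q) Q = idM) (v : V3) :
    ∑ i, (mvmul Q v i) ^ 2 = ∑ i, (v i) ^ 2 := by
  have q00 := orth_diag h 0
  have q11 := orth_diag h 1
  have q22 := orth_diag h 2
  have q01 := orth_off h 0 1 (by decide)
  have q02 := orth_off h 0 2 (by decide)
  have q12 := orth_off h 1 2 (by decide)
  simp only [mvmul, Fin.sum_univ_three]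
  linear_combination (v 0 * v 0) * q00 + (v 1 * v 1) * q11 + (v 2 * v 2) * q22
    + (2 * v 0 * v 1) * q01 + (2 * v 0 * v 2) * q02 + (2 * v 1 * v 2) * q12

-- |A Qᵀ|_F^2 = |A|_F^2  (right multiplication by transpose of orthogonal)
lemma mmul_mtrans_norm_sq {Q : Mat3} (h : mmul (mtrans Q) Q = idM) (A : Mat3) :
    ∑ i, ∑ j, (mmul A (mtrans Q) i j) ^ 2 = ∑ i, ∑ j, (A i j) ^ 2 := by
  have : ∀ i, ∑ j, (mmul A (mtrans Q) i j) ^ 2 = ∑ j, (A i j) ^ 2 := by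
    intro i
    have := mvmul_norm_sq h (fun j => A i j)
    -- mvmul Q (A i ·) k = ∑ j Q k j * A i j ; but mmul A (mtrans Q) i j = ∑ k A i k * Q j k
    simp only [mvmul, mmul, mtrans, Fin.sum_univ_three] at this ⊢
    linear_combination this
  simp only [this]

set_option maxHeartbeats 1000000 in
def rodT (s t : V3) : Mat3 :=
  ![![(t 2)*(s 2) + (t 2)^2*(s 2)^2 + (t 2)^2*(s 1)^2 + (t 1)*(s 1) + (t 1)^2*(s 2)^2 + (t 1)^2*(s 1)^2 + (t 0)*(s 0) + (2)*(t 0)*(t 2)*(s 0)*(s 2) + (2)*(t 0)*(t 1)*(s 0)*(s 1) + (t 0)^2*(s 0)^2,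
      (-1)*(t 2)^2*(s 0)*(s 1) + (-1)*(t 1)*(s 0) + (-1)*(t 1)^2*(s 0)*(s 1) + (t 0)*(s 1) + (2)*(t 0)*(t 2)*(s 1)*(s 2) + (-1)*(t 0)*(t 1)*(s 2)^2 + (t 0)*(t 1)*(s 1)^2 + (-1)*(t 0)*(t 1)*(s 0)^2 + (t 0)^2*(s 0)*(s 1),
      (-1)*(t 2)*(s 0) + (-1)*(t 2)^2*(s 0)*(s 2) + (-1)*(t 1)^2*(s 0)*(s 2) + (t 0)*(s 2) + (t 0)*(t 2)*(s 2)^2 + (-1)*(t 0)*(t 2)*(s 1)^2 + (-1)*(t 0)*(t 2)*(s 0)^2 + (2)*(t 0)*(t 1)*(s 1)*(s 2) + (t 0)^2*(s 0)*(s 2)],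
    ![(-1)*(t 2)^2*(s 0)*(s 1) + (t 1)*(s 0) + (2)*(t 1)*(t 2)*(s 0)*(s 2) + (t 1)^2*(s 0)*(s 1) + (-1)*(t 0)*(s 1) + (-1)*(t 0)*(t 1)*(s 2)^2 + (-1)*(t 0)*(t 1)*(s 1)^2 + (t 0)*(t 1)*(s 0)^2 + (-1)*(t 0)^2*(s 0)*(s 1),
      (t 2)*(s 2) + (t 2)^2*(s 2)^2 + (t 2)^2*(s 0)^2 + (t 1)*(s 1) + (2)*(t 1)*(t 2)*(s 1)*(s 2) + (t 1)^2*(s 1)^2 + (t 0)*(s 0) + (2)*(t 0)*(t 1)*(s 0)*(s 1) + (t 0)^2*(s 2)^2 + (t 0)^2*(s 0)^2,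
      (-1)*(t 2)*(s 1) + (-1)*(t 2)^2*(s 1)*(s 2) + (t 1)*(s 2) + (t 1)*(t 2)*(s 2)^2 + (-1)*(t 1)*(t 2)*(s 1)^2 + (-1)*(t 1)*(t 2)*(s 0)^2 + (t 1)^2*(s 1)*(s 2) + (2)*(t 0)*(t 1)*(s 0)*(s 2) + (-1)*(t 0)^2*(s 1)*(s 2)],
    ![(t 2)*(s 0) + (t 2)^2*(s 0)*(s 2) + (2)*(t 1)*(t 2)*(s 0)*(s 1) + (-1)*(t 1)^2*(s 0)*(s 2) + (-1)*(t 0)*(s 2) + (-1)*(t 0)*(t 2)*(s 2)^2 + (-1)*(t 0)*(t 2)*(s 1)^2 + (t 0)*(t 2)*(s 0)^2 + (-1)*(t 0)^2*(s 0)*(s 2),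
      (t 2)*(s 1) + (t 2)^2*(s 1)*(s 2) + (-1)*(t 1)*(s 2) + (-1)*(t 1)*(t 2)*(s 2)^2 + (t 1)*(t 2)*(s 1)^2 + (-1)*(t 1)*(t 2)*(s 0)^2 + (-1)*(t 1)^2*(s 1)*(s 2) + (2)*(t 0)*(t 2)*(s 0)*(s 1) + (-1)*(t 0)^2*(s 1)*(s 2),
      (t 2)*(s 2) + (t 2)^2*(s 2)^2 + (t 1)*(s 1) + (2)*(t 1)*(t 2)*(s 1)*(s 2) + (t 1)^2*(s 1)^2 + (t 1)^2*(s 0)^2 + (t 0)*(s 0) + (2)*(t 0)*(t 2)*(s 0)*(s 2) + (t 0)^2*(s 1)^2 + (t 0)^2*(s 0)^2]]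

set_option maxHeartbeats 1000000 in
lemma rod_orth (s t : V3) (ht : t 0^2 + t 1^2 + t 2^2 = 1) (hs : s 0^2 + s 1^2 + s 2^2 = 1) (a b : Fin 3) :
    rodT s t 0 a * rodT s t 0 b + rodT s t 1 a * rodT s t 1 b + rodT s t 2 a * rodT s t 2 b
      = (if a = b then 1 else 0) * (1 + (t 0 * s 0 + t 1 * s 1 + t 2 * s 2))^2 := by
  fin_cases a <;> fin_cases b
  · simp only [rodT, Matrix.cons_val_zero, Matrix.cons_val_one, Matrix.head_cons, Matrix.cons_val_two, Matrix.tail_cons, Fin.zero_eta, Fin.mk_one, Fin.reduceFinMk]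
    norm_num [Fin.ext_iff]
    linear_combination ((s 2)^2 + (s 1)^2 + (s 0)^2*(s 2)^2 + (s 0)^2*(s 1)^2 + (s 0)^4 + (2)*(t 2)*(s 2)^3 + (2)*(t 2)*(s 1)^2*(s 2) + (2)*(t 2)*(s 0)^2*(s 2) + (t 2)^2*(s 2)^4 + (2)*(t 2)^2*(s 1)^2*(s 2)^2 + (t 2)^2*(s 1)^4 + (t 2)^2*(s 0)^2*(s 2)^2 + (t 2)^2*(s 0)^2*(s 1)^2 + (2)*(t 1)*(s 1)*(s 2)^2 + (2)*(t 1)*(s 1)^3 + (2)*(t 1)*(s 0)^2*(s 1) + (t 1)^2*(s 2)^4 + (2)*(t 1)^2*(s 1)^2*(s 2)^2 + (t 1)^2*(s 1)^4 + (t 1)^2*(s 0)^2*(s 2)^2 + (t 1)^2*(s 0)^2*(s 1)^2 + (2)*(t 0)*(s 0)*(s 2)^2 + (2)*(t 0)*(s 0)*(s 1)^2 + (2)*(t 0)*(s 0)^3 + (2)*(t 0)*(t 2)*(s 0)*(s 2)^3 + (2)*(t 0)*(t 2)*(s 0)*(s 1)^2*(s 2) + (2)*(t 0)*(t 2)*(s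 0)^3*(s 2) + (2)*(t 0)*(t 1)*(s 0)*(s 1)*(s 2)^2 + (2)*(t 0)*(t 1)*(s 0)*(s 1)^3 + (2)*(t 0)*(t 1)*(s 0)^3*(s 1) + (t 0)^2*(s 0)^2*(s 2)^2 + (t 0)^2*(s 0)^2*(s 1)^2 + (t 0)^2*(s 0)^4) * ht + ((1) + (s 0)^2 + (2)*(t 2)*(s 2) + (t 2)^2*(s 2)^2 + (t 2)^2*(s 1)^2 + (-1)*(t 2)^2*(s 0)^2 + (2)*(t 1)*(s 1) + (t 1)^2*(s 2)^2 + (t 1)^2*(s 1)^2 + (-1)*(t 1)^2*(s 0)^2 + (2)*(t 0)*(s 0) + (2)*(t 0)*(t 2)*(s 0)*(s 2) + (2)*(t 0)*(t 1)*(s 0)*(s 1)) * hs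
  · simp only [rodT, Matrix.cons_val_zero, Matrix.cons_val_one, Matrix.head_cons, Matrix.cons_val_two, Matrix.tail_cons, Fin.zero_eta, Fin.mk_one, Fin.reduceFinMk]
    norm_num [Fin.ext_iff]
    linear_combination ((-1)*(t 2)^2*(s 0)*(s 1)*(s 2)^2 + (-1)*(t 2)^2*(s 0)*(s 1)^3 + (-1)*(t 2)^2*(s 0)^3*(s 1) + (t 1)*(t 2)*(s 0)*(s 2)^3 + (t 1)*(t 2)*(s 0)*(s 1)^2*(s 2) + (t 1)*(t 2)*(s 0)^3*(s 2) + (t 0)*(t 2)*(s 1)*(s 2)^3 + (t 0)*(t 2)*(s 1)^3*(s 2) + (t 0)*(t 2)*(s 0)^2*(s 1)*(s 2) + (-1)*(t 0)*(t 1)*(s 2)^4 + (-1)*(t 0)*(t 1)*(s 1)^2*(s 2)^2 + (-1)*(t 0)*(t 1)*(s 0)^2*(s 2)^2) * ht + ((-1)*(t 2)^2*(s 0)*(s 1) + (t 1)*(t 2)*(s 0)*(s 2) + (t 0)*(t 2)*(s 1)*(s 2) + (-1)*(t 0)*(t 1)*(s 2)^2) * hs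
  · simp only [rodT, Matrix.cons_val_zero, Matrix.cons_val_one, Matrix.head_cons, Matrix.cons_val_two, Matrix.tail_cons, Fin.zero_eta, Fin.mk_one, Fin.reduceFinMk]
    norm_num [Fin.ext_iff]
    linear_combination ((t 1)*(t 2)*(s 0)*(s 1)*(s 2)^2 + (t 1)*(t 2)*(s 0)*(s 1)^3 + (t 1)*(t 2)*(s 0)^3*(s 1) + (-1)*(t 1)^2*(s 0)*(s 2)^3 + (-1)*(t 1)^2*(s 0)*(s 1)^2*(s 2) + (-1)*(t 1)^2*(s 0)^3*(s 2) + (-1)*(t 0)*(t 2)*(s 1)^2*(s 2)^2 + (-1)*(t 0)*(t 2)*(s 1)^4 + (-1)*(t 0)*(t 2)*(s 0)^2*(s 1)^2 + (t 0)*(t 1)*(s 1)*(s 2)^3 + (t 0)*(t 1)*(s 1)^3*(s 2) + (t 0)*(t 1)*(s 0)^2*(s 1)*(s 2)) * ht + ((t 1)*(t 2)*(s 0)*(s 1) + (-1)*(t 1)^2*(s 0)*(s 2) + (-1)*(t 0)*(t 2)*(s 1)^2 + (t 0)*(t 1)*(s 1)*(s 2)) * hs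
  · simp only [rodT, Matrix.cons_val_zero, Matrix.cons_val_one, Matrix.head_cons, Matrix.cons_val_two, Matrix.tail_cons, Fin.zero_eta, Fin.mk_one, Fin.reduceFinMk]
    norm_num [Fin.ext_iff]
    linear_combination ((-1)*(t 2)^2*(s 0)*(s 1)*(s 2)^2 + (-1)*(t 2)^2*(s 0)*(s 1)^3 + (-1)*(t 2)^2*(s 0)^3*(s 1) + (t 1)*(t 2)*(s 0)*(s 2)^3 + (t 1)*(t 2)*(s 0)*(s 1)^2*(s 2) + (t 1)*(t 2)*(s 0)^3*(s 2) + (t 0)*(t 2)*(s 1)*(s 2)^3 + (t 0)*(t 2)*(s 1)^3*(s 2) + (t 0)*(t 2)*(s 0)^2*(s 1)*(s 2) + (-1)*(t 0)*(t 1)*(s 2)^4 + (-1)*(t 0)*(t 1)*(s 1)^2*(s 2)^2 + (-1)*(t 0)*(t 1)*(s 0)^2*(s 2)^2) * ht + ((-1)*(t 2)^2*(s 0)*(s 1) + (t 1)*(t 2)*(s 0)*(s 2) + (t 0)*(t 2)*(s 1)*(s 2) + (-1)*(t 0)*(t 1)*(s 2)^2) * hs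
  · simp only [rodT, Matrix.cons_val_zero, Matrix.cons_val_one, Matrix.head_cons, Matrix.cons_val_two, Matrix.tail_cons, Fin.zero_eta, Fin.mk_one, Fin.reduceFinMk]
    norm_num [Fin.ext_iff]
    linear_combination ((s 2)^4 + (s 1)^2 + (s 1)^2*(s 2)^2 + (2)*(s 0)^2*(s 2)^2 + (s 0)^2*(s 1)^2 + (s 0)^4 + (2)*(t 2)*(s 2)^3 + (2)*(t 2)*(s 1)^2*(s 2) + (2)*(t 2)*(s 0)^2*(s 2) + (t 2)^2*(s 2)^4 + (t 2)^2*(s 1)^2*(s 2)^2 + (2)*(t 2)^2*(s 0)^2*(s 2)^2 + (t 2)^2*(s 0)^2*(s 1)^2 + (t 2)^2*(s 0)^4 + (2)*(t 1)*(s 1)*(s 2)^2 + (2)*(t 1)*(s 1)^3 + (2)*(t 1)*(s 0)^2*(s 1) + (2)*(t 1)*(t 2)*(s 1)*(s 2)^3 + (2)*(t 1)*(t 2)*(s 1)^3*(s 2) + (2)*(t 1)*(t 2)*(s 0)^2*(s 1)*(s 2) + (t 1)^2*(s 1)^2*(s 2)^2 + (t 1)^2*(s 1)^4 + (t 1)^2*(s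 0)^2*(s 1)^2 + (2)*(t 0)*(s 0)*(s 2)^2 + (2)*(t 0)*(s 0)*(s 1)^2 + (2)*(t 0)*(s 0)^3 + (2)*(t 0)*(t 1)*(s 0)*(s 1)*(s 2)^2 + (2)*(t 0)*(t 1)*(s 0)*(s 1)^3 + (2)*(t 0)*(t 1)*(s 0)^3*(s 1) + (t 0)^2*(s 2)^4 + (t 0)^2*(s 1)^2*(s 2)^2 + (2)*(t 0)^2*(s 0)^2*(s 2)^2 + (t 0)^2*(s 0)^2*(s 1)^2 + (t 0)^2*(s 0)^4) * ht + ((1) + (s 2)^2 + (s 0)^2 + (2)*(t 2)*(s 2) + (2)*(t 1)*(s 1) + (2)*(t 1)*(t 2)*(s 1)*(s 2) + (-1)*(t 1)^2*(s 2)^2 + (t 1)^2*(s 1)^2 + (-1)*(t 1)^2*(s 0)^2 + (2)*(t 0)*(s 0) + (2)*(t 0)*(t 1)*(s 0)*(s 1)) * hs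
  · simp only [rodT, Matrix.cons_val_zero, Matrix.cons_val_one, Matrix.head_cons, Matrix.cons_val_two, Matrix.tail_cons, Fin.zero_eta, Fin.mk_one, Fin.reduceFinMk]
    norm_num [Fin.ext_iff]
    linear_combination ((s 1)*(s 2) + (-1)*(s 1)*(s 2)^3 + (-1)*(s 1)^3*(s 2) + (-1)*(s 0)^2*(s 1)*(s 2) + (-1)*(t 1)*(t 2)*(s 0)^2*(s 2)^2 + (-1)*(t 1)*(t 2)*(s 0)^2*(s 1)^2 + (-1)*(t 1)*(t 2)*(s 0)^4 + (t 0)*(t 2)*(s 0)*(s 1)*(s 2)^2 + (t 0)*(t 2)*(s 0)*(s 1)^3 + (t 0)*(t 2)*(s 0)^3*(s 1) + (t 0)*(t 1)*(s 0)*(s 2)^3 + (t 0)*(t 1)*(s 0)*(s 1)^2*(s 2) + (t 0)*(t 1)*(s 0)^3*(s 2) + (-1)*(t 0)^2*(s 1)*(s 2)^3 + (-1)*(t 0)^2*(s 1)^3*(s 2) + (-1)*(t 0)^2*(s 0)^2*(s 1)*(s 2)) * ht + ((-1)*(s 1)*(s 2) + (t 2)^2*(s 1)*(s 2) + (-1)*(t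 1)*(t 2)*(s 0)^2 + (t 1)^2*(s 1)*(s 2) + (t 0)*(t 2)*(s 0)*(s 1) + (t 0)*(t 1)*(s 0)*(s 2)) * hs
  · simp only [rodT, Matrix.cons_val_zero, Matrix.cons_val_one, Matrix.head_cons, Matrix.cons_val_two, Matrix.tail_cons, Fin.zero_eta, Fin.mk_one, Fin.reduceFinMk]
    norm_num [Fin.ext_iff]
    linear_combination ((t 1)*(t 2)*(s 0)*(s 1)*(s 2)^2 + (t 1)*(t 2)*(s 0)*(s 1)^3 + (t 1)*(t 2)*(s 0)^3*(s 1) + (-1)*(t 1)^2*(s 0)*(s 2)^3 + (-1)*(t 1)^2*(s 0)*(s 1)^2*(s 2) + (-1)*(t 1)^2*(s 0)^3*(s 2) + (-1)*(t 0)*(t 2)*(s 1)^2*(s 2)^2 + (-1)*(t 0)*(t 2)*(s 1)^4 + (-1)*(t 0)*(t 2)*(s 0)^2*(s 1)^2 + (t 0)*(t 1)*(s 1)*(s 2)^3 + (t 0)*(t 1)*(s 1)^3*(s 2) + (t 0)*(t 1)*(s 0)^2*(s 1)*(s 2)) * ht + ((t 1)*(t 2)*(s 0)*(s 1) + (-1)*(t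 1)^2*(s 0)*(s 2) + (-1)*(t 0)*(t 2)*(s 1)^2 + (t 0)*(t 1)*(s 1)*(s 2)) * hs
  · simp only [rodT, Matrix.cons_val_zero, Matrix.cons_val_one, Matrix.head_cons, Matrix.cons_val_two, Matrix.tail_cons, Fin.zero_eta, Fin.mk_one, Fin.reduceFinMk]
    norm_num [Fin.ext_iff]
    linear_combination ((s 1)*(s 2) + (-1)*(s 1)*(s 2)^3 + (-1)*(s 1)^3*(s 2) + (-1)*(s 0)^2*(s 1)*(s 2) + (-1)*(t 1)*(t 2)*(s 0)^2*(s 2)^2 + (-1)*(t 1)*(t 2)*(s 0)^2*(s 1)^2 + (-1)*(t 1)*(t 2)*(s 0)^4 + (t 0)*(t 2)*(s 0)*(s 1)*(s 2)^2 + (t 0)*(t 2)*(s 0)*(s 1)^3 + (t 0)*(t 2)*(s 0)^3*(s 1) + (t 0)*(t 1)*(s 0)*(s 2)^3 + (t 0)*(t 1)*(s 0)*(s 1)^2*(s 2) + (t 0)*(t 1)*(s 0)^3*(s 2) + (-1)*(t 0)^2*(s 1)*(s 2)^3 + (-1)*(t 0)^2*(s 1)^3*(s 2) + (-1)*(t 0)^2*(s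 0)^2*(s 1)*(s 2)) * ht + ((-1)*(s 1)*(s 2) + (t 2)^2*(s 1)*(s 2) + (-1)*(t 1)*(t 2)*(s 0)^2 + (t 1)^2*(s 1)*(s 2) + (t 0)*(t 2)*(s 0)*(s 1) + (t 0)*(t 1)*(s 0)*(s 2)) * hs
  · simp only [rodT, Matrix.cons_val_zero, Matrix.cons_val_one, Matrix.head_cons, Matrix.cons_val_two, Matrix.tail_cons, Fin.zero_eta, Fin.mk_one, Fin.reduceFinMk]
    norm_num [Fin.ext_iff]
    linear_combination ((s 2)^2 + (s 1)^2*(s 2)^2 + (s 1)^4 + (s 0)^2*(s 2)^2 + (2)*(s 0)^2*(s 1)^2 + (s 0)^4 + (2)*(t 2)*(s 2)^3 + (2)*(t 2)*(s 1)^2*(s 2) + (2)*(t 2)*(s 0)^2*(s 2) + (t 2)^2*(s 2)^4 + (t 2)^2*(s 1)^2*(s 2)^2 + (t 2)^2*(s 0)^2*(s 2)^2 + (2)*(t 1)*(s 1)*(s 2)^2 + (2)*(t 1)*(s 1)^3 + (2)*(t 1)*(s 0)^2*(s 1) + (2)*(t 1)*(t 2)*(s 1)*(s 2)^3 + (2)*(t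 1)*(t 2)*(s 1)^3*(s 2) + (2)*(t 1)*(t 2)*(s 0)^2*(s 1)*(s 2) + (t 1)^2*(s 1)^2*(s 2)^2 + (t 1)^2*(s 1)^4 + (t 1)^2*(s 0)^2*(s 2)^2 + (2)*(t 1)^2*(s 0)^2*(s 1)^2 + (t 1)^2*(s 0)^4 + (2)*(t 0)*(s 0)*(s 2)^2 + (2)*(t 0)*(s 0)*(s 1)^2 + (2)*(t 0)*(s 0)^3 + (2)*(t 0)*(t 2)*(s 0)*(s 2)^3 + (2)*(t 0)*(t 2)*(s 0)*(s 1)^2*(s 2) + (2)*(t 0)*(t 2)*(s 0)^3*(s 2) + (t 0)^2*(s 1)^2*(s 2)^2 + (t 0)^2*(s 1)^4 + (t 0)^2*(s 0)^2*(s 2)^2 + (2)*(t 0)^2*(s 0)^2*(s 1)^2 + (t 0)^2*(s 0)^4) * ht + ((1) + (s 1)^2 + (s 0)^2 + (2)*(t 2)*(s 2) + (t 2)^2*(s 2)^2 + (-1)*(t 2)^2*(s 1)^2 + (-1)*(t 2)^2*(s 0)^2 + (2)*(t 1)*(s 1) + (2)*(t 1)*(t 2)*(s 1)*(s 2) + (2)*(t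 0)*(s 0) + (2)*(t 0)*(t 2)*(s 0)*(s 2)) * hs

set_option maxHeartbeats 1000000 in
lemma rod_det (s t : V3) (ht : t 0^2 + t 1^2 + t 2^2 = 1) (hs : s 0^2 + s 1^2 + s 2^2 = 1) :
    rodT s t 0 0 * rodT s t 1 1 * rodT s t 2 2 + rodT s t 0 1 * rodT s t 1 2 * rodT s t 2 0 + rodT s t 0 2 * rodT s t 1 0 * rodT s t 2 1 - rodT s t 0 0 * rodT s t 1 2 * rodT s t 2 1 - rodT s t 0 2 * rodT s t 1 1 * rodT s t 2 0 - rodT s t 0 1 * rodT s t 1 0 * rodT s t 2 2 = (1 + (t 0 * s 0 + t 1 * s 1 + t 2 * s 2))^3 := by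
  simp only [rodT, Matrix.cons_val_zero, Matrix.cons_val_one, Matrix.head_cons, Matrix.cons_val_two, Matrix.tail_cons, Fin.zero_eta, Fin.mk_one, Fin.reduceFinMk]
  linear_combination ((s 2)^4 + (2)*(s 1)^2*(s 2)^2 + (s 1)^4 + (-3)*(s 0)^2 + (4)*(s 0)^2*(s 2)^2 + (s 0)^2*(s 2)^4 + (4)*(s 0)^2*(s 1)^2 + (2)*(s 0)^2*(s 1)^2*(s 2)^2 + (s 0)^2*(s 1)^4 + (3)*(s 0)^4 + (2)*(s 0)^4*(s 2)^2 + (2)*(s 0)^4*(s 1)^2 + (s 0)^6 + (t 2)*(s 2)^3 + (2)*(t 2)*(s 2)^5 + (t 2)*(s 1)^2*(s 2) + (4)*(t 2)*(s 1)^2*(s 2)^3 + (2)*(t 2)*(s 1)^4*(s 2) + (-2)*(t 2)*(s 0)^2*(s 2) + (7)*(t 2)*(s 0)^2*(s 2)^3 + (7)*(t 2)*(s 0)^2*(s 1)^2*(s 2) + (5)*(t 2)*(s 0)^4*(s 2) + (3)*(t 2)^2*(s 2)^4 + (t 2)^2*(s 2)^6 + (4)*(t 2)^2*(s 1)^2*(s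 2)^2 + (2)*(t 2)^2*(s 1)^2*(s 2)^4 + (t 2)^2*(s 1)^4 + (t 2)^2*(s 1)^4*(s 2)^2 + (4)*(t 2)^2*(s 0)^2*(s 2)^2 + (2)*(t 2)^2*(s 0)^2*(s 2)^4 + (2)*(t 2)^2*(s 0)^2*(s 1)^2 + (2)*(t 2)^2*(s 0)^2*(s 1)^2*(s 2)^2 + (t 2)^2*(s 0)^4 + (t 2)^2*(s 0)^4*(s 2)^2 + (3)*(t 2)^3*(s 2)^5 + (5)*(t 2)^3*(s 1)^2*(s 2)^3 + (2)*(t 2)^3*(s 1)^4*(s 2) + (5)*(t 2)^3*(s 0)^2*(s 2)^3 + (4)*(t 2)^3*(s 0)^2*(s 1)^2*(s 2) + (2)*(t 2)^3*(s 0)^4*(s 2) + (t 2)^4*(s 2)^6 + (2)*(t 2)^4*(s 1)^2*(s 2)^4 + (t 2)^4*(s 1)^4*(s 2)^2 + (2)*(t 2)^4*(s 0)^2*(s 2)^4 + (2)*(t 2)^4*(s 0)^2*(s 1)^2*(s 2)^2 + (t 2)^4*(s 0)^4*(s 2)^2 + (t 1)*(s 1)*(s 2)^2 + (2)*(t 1)*(s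 1)*(s 2)^4 + (t 1)*(s 1)^3 + (4)*(t 1)*(s 1)^3*(s 2)^2 + (2)*(t 1)*(s 1)^5 + (-2)*(t 1)*(s 0)^2*(s 1) + (7)*(t 1)*(s 0)^2*(s 1)*(s 2)^2 + (7)*(t 1)*(s 0)^2*(s 1)^3 + (5)*(t 1)*(s 0)^4*(s 1) + (4)*(t 1)*(t 2)*(s 1)*(s 2)^3 + (2)*(t 1)*(t 2)*(s 1)*(s 2)^5 + (4)*(t 1)*(t 2)*(s 1)^3*(s 2) + (4)*(t 1)*(t 2)*(s 1)^3*(s 2)^3 + (2)*(t 1)*(t 2)*(s 1)^5*(s 2) + (4)*(t 1)*(t 2)*(s 0)^2*(s 1)*(s 2) + (4)*(t 1)*(t 2)*(s 0)^2*(s 1)*(s 2)^3 + (4)*(t 1)*(t 2)*(s 0)^2*(s 1)^3*(s 2) + (2)*(t 1)*(t 2)*(s 0)^4*(s 1)*(s 2) + (5)*(t 1)*(t 2)^2*(s 1)*(s 2)^4 + (7)*(t 1)*(t 2)^2*(s 1)^3*(s 2)^2 + (2)*(t 1)*(t 2)^2*(s 1)^5 + (7)*(t 1)*(t 2)^2*(s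 0)^2*(s 1)*(s 2)^2 + (4)*(t 1)*(t 2)^2*(s 0)^2*(s 1)^3 + (2)*(t 1)*(t 2)^2*(s 0)^4*(s 1) + (2)*(t 1)*(t 2)^3*(s 1)*(s 2)^5 + (4)*(t 1)*(t 2)^3*(s 1)^3*(s 2)^3 + (2)*(t 1)*(t 2)^3*(s 1)^5*(s 2) + (4)*(t 1)*(t 2)^3*(s 0)^2*(s 1)*(s 2)^3 + (4)*(t 1)*(t 2)^3*(s 0)^2*(s 1)^3*(s 2) + (2)*(t 1)*(t 2)^3*(s 0)^4*(s 1)*(s 2) + (t 1)^2*(s 2)^4 + (4)*(t 1)^2*(s 1)^2*(s 2)^2 + (t 1)^2*(s 1)^2*(s 2)^4 + (3)*(t 1)^2*(s 1)^4 + (2)*(t 1)^2*(s 1)^4*(s 2)^2 + (t 1)^2*(s 1)^6 + (2)*(t 1)^2*(s 0)^2*(s 2)^2 + (4)*(t 1)^2*(s 0)^2*(s 1)^2 + (2)*(t 1)^2*(s 0)^2*(s 1)^2*(s 2)^2 + (2)*(t 1)^2*(s 0)^2*(s 1)^4 + (t 1)^2*(s 0)^4 + (t 1)^2*(s 0)^4*(s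 1)^2 + (2)*(t 1)^2*(t 2)*(s 2)^5 + (7)*(t 1)^2*(t 2)*(s 1)^2*(s 2)^3 + (5)*(t 1)^2*(t 2)*(s 1)^4*(s 2) + (4)*(t 1)^2*(t 2)*(s 0)^2*(s 2)^3 + (7)*(t 1)^2*(t 2)*(s 0)^2*(s 1)^2*(s 2) + (2)*(t 1)^2*(t 2)*(s 0)^4*(s 2) + (t 1)^2*(t 2)^2*(s 2)^6 + (3)*(t 1)^2*(t 2)^2*(s 1)^2*(s 2)^4 + (3)*(t 1)^2*(t 2)^2*(s 1)^4*(s 2)^2 + (t 1)^2*(t 2)^2*(s 1)^6 + (2)*(t 1)^2*(t 2)^2*(s 0)^2*(s 2)^4 + (4)*(t 1)^2*(t 2)^2*(s 0)^2*(s 1)^2*(s 2)^2 + (2)*(t 1)^2*(t 2)^2*(s 0)^2*(s 1)^4 + (t 1)^2*(t 2)^2*(s 0)^4*(s 2)^2 + (t 1)^2*(t 2)^2*(s 0)^4*(s 1)^2 + (2)*(t 1)^3*(s 1)*(s 2)^4 + (5)*(t 1)^3*(s 1)^3*(s 2)^2 + (3)*(t 1)^3*(s 1)^5 + (4)*(t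 1)^3*(s 0)^2*(s 1)*(s 2)^2 + (5)*(t 1)^3*(s 0)^2*(s 1)^3 + (2)*(t 1)^3*(s 0)^4*(s 1) + (2)*(t 1)^3*(t 2)*(s 1)*(s 2)^5 + (4)*(t 1)^3*(t 2)*(s 1)^3*(s 2)^3 + (2)*(t 1)^3*(t 2)*(s 1)^5*(s 2) + (4)*(t 1)^3*(t 2)*(s 0)^2*(s 1)*(s 2)^3 + (4)*(t 1)^3*(t 2)*(s 0)^2*(s 1)^3*(s 2) + (2)*(t 1)^3*(t 2)*(s 0)^4*(s 1)*(s 2) + (t 1)^4*(s 1)^2*(s 2)^4 + (2)*(t 1)^4*(s 1)^4*(s 2)^2 + (t 1)^4*(s 1)^6 + (2)*(t 1)^4*(s 0)^2*(s 1)^2*(s 2)^2 + (2)*(t 1)^4*(s 0)^2*(s 1)^4 + (t 1)^4*(s 0)^4*(s 1)^2 + (t 0)*(s 0)*(s 2)^2 + (2)*(t 0)*(s 0)*(s 2)^4 + (t 0)*(s 0)*(s 1)^2 + (4)*(t 0)*(s 0)*(s 1)^2*(s 2)^2 + (2)*(t 0)*(s 0)*(s 1)^4 + (5)*(t 0)*(s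 0)^3*(s 2)^2 + (5)*(t 0)*(s 0)^3*(s 1)^2 + (3)*(t 0)*(s 0)^5 + (4)*(t 0)*(t 2)*(s 0)*(s 2)^3 + (2)*(t 0)*(t 2)*(s 0)*(s 2)^5 + (4)*(t 0)*(t 2)*(s 0)*(s 1)^2*(s 2) + (4)*(t 0)*(t 2)*(s 0)*(s 1)^2*(s 2)^3 + (2)*(t 0)*(t 2)*(s 0)*(s 1)^4*(s 2) + (4)*(t 0)*(t 2)*(s 0)^3*(s 2) + (4)*(t 0)*(t 2)*(s 0)^3*(s 2)^3 + (4)*(t 0)*(t 2)*(s 0)^3*(s 1)^2*(s 2) + (2)*(t 0)*(t 2)*(s 0)^5*(s 2) + (5)*(t 0)*(t 2)^2*(s 0)*(s 2)^4 + (7)*(t 0)*(t 2)^2*(s 0)*(s 1)^2*(s 2)^2 + (2)*(t 0)*(t 2)^2*(s 0)*(s 1)^4 + (7)*(t 0)*(t 2)^2*(s 0)^3*(s 2)^2 + (4)*(t 0)*(t 2)^2*(s 0)^3*(s 1)^2 + (2)*(t 0)*(t 2)^2*(s 0)^5 + (2)*(t 0)*(t 2)^3*(s 0)*(s 2)^5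 + (4)*(t 0)*(t 2)^3*(s 0)*(s 1)^2*(s 2)^3 + (2)*(t 0)*(t 2)^3*(s 0)*(s 1)^4*(s 2) + (4)*(t 0)*(t 2)^3*(s 0)^3*(s 2)^3 + (4)*(t 0)*(t 2)^3*(s 0)^3*(s 1)^2*(s 2) + (2)*(t 0)*(t 2)^3*(s 0)^5*(s 2) + (4)*(t 0)*(t 1)*(s 0)*(s 1)*(s 2)^2 + (2)*(t 0)*(t 1)*(s 0)*(s 1)*(s 2)^4 + (4)*(t 0)*(t 1)*(s 0)*(s 1)^3 + (4)*(t 0)*(t 1)*(s 0)*(s 1)^3*(s 2)^2 + (2)*(t 0)*(t 1)*(s 0)*(s 1)^5 + (4)*(t 0)*(t 1)*(s 0)^3*(s 1) + (4)*(t 0)*(t 1)*(s 0)^3*(s 1)*(s 2)^2 + (4)*(t 0)*(t 1)*(s 0)^3*(s 1)^3 + (2)*(t 0)*(t 1)*(s 0)^5*(s 1) + (6)*(t 0)*(t 1)*(t 2)*(s 0)*(s 1)*(s 2)^3 + (6)*(t 0)*(t 1)*(t 2)*(s 0)*(s 1)^3*(s 2) + (6)*(t 0)*(t 1)*(t 2)*(s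 0)^3*(s 1)*(s 2) + (2)*(t 0)*(t 1)*(t 2)^2*(s 0)*(s 1)*(s 2)^4 + (4)*(t 0)*(t 1)*(t 2)^2*(s 0)*(s 1)^3*(s 2)^2 + (2)*(t 0)*(t 1)*(t 2)^2*(s 0)*(s 1)^5 + (4)*(t 0)*(t 1)*(t 2)^2*(s 0)^3*(s 1)*(s 2)^2 + (4)*(t 0)*(t 1)*(t 2)^2*(s 0)^3*(s 1)^3 + (2)*(t 0)*(t 1)*(t 2)^2*(s 0)^5*(s 1) + (2)*(t 0)*(t 1)^2*(s 0)*(s 2)^4 + (7)*(t 0)*(t 1)^2*(s 0)*(s 1)^2*(s 2)^2 + (5)*(t 0)*(t 1)^2*(s 0)*(s 1)^4 + (4)*(t 0)*(t 1)^2*(s 0)^3*(s 2)^2 + (7)*(t 0)*(t 1)^2*(s 0)^3*(s 1)^2 + (2)*(t 0)*(t 1)^2*(s 0)^5 + (2)*(t 0)*(t 1)^2*(t 2)*(s 0)*(s 2)^5 + (4)*(t 0)*(t 1)^2*(t 2)*(s 0)*(s 1)^2*(s 2)^3 + (2)*(t 0)*(t 1)^2*(t 2)*(s 0)*(s 1)^4*(s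 2) + (4)*(t 0)*(t 1)^2*(t 2)*(s 0)^3*(s 2)^3 + (4)*(t 0)*(t 1)^2*(t 2)*(s 0)^3*(s 1)^2*(s 2) + (2)*(t 0)*(t 1)^2*(t 2)*(s 0)^5*(s 2) + (2)*(t 0)*(t 1)^3*(s 0)*(s 1)*(s 2)^4 + (4)*(t 0)*(t 1)^3*(s 0)*(s 1)^3*(s 2)^2 + (2)*(t 0)*(t 1)^3*(s 0)*(s 1)^5 + (4)*(t 0)*(t 1)^3*(s 0)^3*(s 1)*(s 2)^2 + (4)*(t 0)*(t 1)^3*(s 0)^3*(s 1)^3 + (2)*(t 0)*(t 1)^3*(s 0)^5*(s 1) + (t 0)^2*(s 2)^4 + (2)*(t 0)^2*(s 1)^2*(s 2)^2 + (t 0)^2*(s 1)^4 + (4)*(t 0)^2*(s 0)^2*(s 2)^2 + (t 0)^2*(s 0)^2*(s 2)^4 + (4)*(t 0)^2*(s 0)^2*(s 1)^2 + (2)*(t 0)^2*(s 0)^2*(s 1)^2*(s 2)^2 + (t 0)^2*(s 0)^2*(s 1)^4 + (3)*(t 0)^2*(s 0)^4 + (2)*(t 0)^2*(s 0)^4*(s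 2)^2 + (2)*(t 0)^2*(s 0)^4*(s 1)^2 + (t 0)^2*(s 0)^6 + (2)*(t 0)^2*(t 2)*(s 2)^5 + (4)*(t 0)^2*(t 2)*(s 1)^2*(s 2)^3 + (2)*(t 0)^2*(t 2)*(s 1)^4*(s 2) + (7)*(t 0)^2*(t 2)*(s 0)^2*(s 2)^3 + (7)*(t 0)^2*(t 2)*(s 0)^2*(s 1)^2*(s 2) + (5)*(t 0)^2*(t 2)*(s 0)^4*(s 2) + (t 0)^2*(t 2)^2*(s 2)^6 + (2)*(t 0)^2*(t 2)^2*(s 1)^2*(s 2)^4 + (t 0)^2*(t 2)^2*(s 1)^4*(s 2)^2 + (3)*(t 0)^2*(t 2)^2*(s 0)^2*(s 2)^4 + (4)*(t 0)^2*(t 2)^2*(s 0)^2*(s 1)^2*(s 2)^2 + (t 0)^2*(t 2)^2*(s 0)^2*(s 1)^4 + (3)*(t 0)^2*(t 2)^2*(s 0)^4*(s 2)^2 + (2)*(t 0)^2*(t 2)^2*(s 0)^4*(s 1)^2 + (t 0)^2*(t 2)^2*(s 0)^6 + (2)*(t 0)^2*(t 1)*(s 1)*(s 2)^4 + (4)*(t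 0)^2*(t 1)*(s 1)^3*(s 2)^2 + (2)*(t 0)^2*(t 1)*(s 1)^5 + (7)*(t 0)^2*(t 1)*(s 0)^2*(s 1)*(s 2)^2 + (7)*(t 0)^2*(t 1)*(s 0)^2*(s 1)^3 + (5)*(t 0)^2*(t 1)*(s 0)^4*(s 1) + (2)*(t 0)^2*(t 1)*(t 2)*(s 1)*(s 2)^5 + (4)*(t 0)^2*(t 1)*(t 2)*(s 1)^3*(s 2)^3 + (2)*(t 0)^2*(t 1)*(t 2)*(s 1)^5*(s 2) + (4)*(t 0)^2*(t 1)*(t 2)*(s 0)^2*(s 1)*(s 2)^3 + (4)*(t 0)^2*(t 1)*(t 2)*(s 0)^2*(s 1)^3*(s 2) + (2)*(t 0)^2*(t 1)*(t 2)*(s 0)^4*(s 1)*(s 2) + (t 0)^2*(t 1)^2*(s 1)^2*(s 2)^4 + (2)*(t 0)^2*(t 1)^2*(s 1)^4*(s 2)^2 + (t 0)^2*(t 1)^2*(s 1)^6 + (t 0)^2*(t 1)^2*(s 0)^2*(s 2)^4 + (4)*(t 0)^2*(t 1)^2*(s 0)^2*(s 1)^2*(s 2)^2 + (3)*(t 0)^2*(t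 1)^2*(s 0)^2*(s 1)^4 + (2)*(t 0)^2*(t 1)^2*(s 0)^4*(s 2)^2 + (3)*(t 0)^2*(t 1)^2*(s 0)^4*(s 1)^2 + (t 0)^2*(t 1)^2*(s 0)^6 + (2)*(t 0)^3*(s 0)*(s 2)^4 + (4)*(t 0)^3*(s 0)*(s 1)^2*(s 2)^2 + (2)*(t 0)^3*(s 0)*(s 1)^4 + (5)*(t 0)^3*(s 0)^3*(s 2)^2 + (5)*(t 0)^3*(s 0)^3*(s 1)^2 + (3)*(t 0)^3*(s 0)^5 + (2)*(t 0)^3*(t 2)*(s 0)*(s 2)^5 + (4)*(t 0)^3*(t 2)*(s 0)*(s 1)^2*(s 2)^3 + (2)*(t 0)^3*(t 2)*(s 0)*(s 1)^4*(s 2) + (4)*(t 0)^3*(t 2)*(s 0)^3*(s 2)^3 + (4)*(t 0)^3*(t 2)*(s 0)^3*(s 1)^2*(s 2) + (2)*(t 0)^3*(t 2)*(s 0)^5*(s 2) + (2)*(t 0)^3*(t 1)*(s 0)*(s 1)*(s 2)^4 + (4)*(t 0)^3*(t 1)*(s 0)*(s 1)^3*(s 2)^2 + (2)*(t 0)^3*(t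 1)*(s 0)*(s 1)^5 + (4)*(t 0)^3*(t 1)*(s 0)^3*(s 1)*(s 2)^2 + (4)*(t 0)^3*(t 1)*(s 0)^3*(s 1)^3 + (2)*(t 0)^3*(t 1)*(s 0)^5*(s 1) + (t 0)^4*(s 0)^2*(s 2)^4 + (2)*(t 0)^4*(s 0)^2*(s 1)^2*(s 2)^2 + (t 0)^4*(s 0)^2*(s 1)^4 + (2)*(t 0)^4*(s 0)^4*(s 2)^2 + (2)*(t 0)^4*(s 0)^4*(s 1)^2 + (t 0)^4*(s 0)^6) * ht + ((1) + (s 2)^2 + (s 1)^2 + (4)*(s 0)^2 + (s 0)^2*(s 2)^2 + (s 0)^2*(s 1)^2 + (s 0)^4 + (3)*(t 2)*(s 2) + (2)*(t 2)*(s 2)^3 + (2)*(t 2)*(s 1)^2*(s 2) + (5)*(t 2)*(s 0)^2*(s 2) + (3)*(t 2)^2*(s 2)^2 + (t 2)^2*(s 2)^4 + (t 2)^2*(s 1)^2*(s 2)^2 + (-3)*(t 2)^2*(s 0)^2 + (-1)*(t 2)^2*(s 0)^2*(s 1)^2 + (-1)*(t 2)^2*(s 0)^4 + (t 2)^3*(s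 2)^3 + (-3)*(t 2)^3*(s 0)^2*(s 2) + (3)*(t 1)*(s 1) + (2)*(t 1)*(s 1)*(s 2)^2 + (2)*(t 1)*(s 1)^3 + (5)*(t 1)*(s 0)^2*(s 1) + (6)*(t 1)*(t 2)*(s 1)*(s 2) + (2)*(t 1)*(t 2)*(s 1)*(s 2)^3 + (2)*(t 1)*(t 2)*(s 1)^3*(s 2) + (2)*(t 1)*(t 2)*(s 0)^2*(s 1)*(s 2) + (3)*(t 1)*(t 2)^2*(s 1)*(s 2)^2 + (-3)*(t 1)*(t 2)^2*(s 0)^2*(s 1) + (3)*(t 1)^2*(s 1)^2 + (t 1)^2*(s 1)^2*(s 2)^2 + (t 1)^2*(s 1)^4 + (-3)*(t 1)^2*(s 0)^2 + (-1)*(t 1)^2*(s 0)^2*(s 2)^2 + (-1)*(t 1)^2*(s 0)^4 + (3)*(t 1)^2*(t 2)*(s 1)^2*(s 2) + (-3)*(t 1)^2*(t 2)*(s 0)^2*(s 2) + (t 1)^3*(s 1)^3 + (-3)*(t 1)^3*(s 0)^2*(s 1) + (3)*(t 0)*(s 0) + (2)*(t 0)*(s 0)*(s 2)^2 + (2)*(t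 0)*(s 0)*(s 1)^2 + (3)*(t 0)*(s 0)^3 + (6)*(t 0)*(t 2)*(s 0)*(s 2) + (2)*(t 0)*(t 2)*(s 0)*(s 2)^3 + (2)*(t 0)*(t 2)*(s 0)*(s 1)^2*(s 2) + (2)*(t 0)*(t 2)*(s 0)^3*(s 2) + (3)*(t 0)*(t 2)^2*(s 0)*(s 2)^2 + (-1)*(t 0)*(t 2)^2*(s 0)^3 + (6)*(t 0)*(t 1)*(s 0)*(s 1) + (2)*(t 0)*(t 1)*(s 0)*(s 1)*(s 2)^2 + (2)*(t 0)*(t 1)*(s 0)*(s 1)^3 + (2)*(t 0)*(t 1)*(s 0)^3*(s 1) + (6)*(t 0)*(t 1)*(t 2)*(s 0)*(s 1)*(s 2) + (3)*(t 0)*(t 1)^2*(s 0)*(s 1)^2 + (-1)*(t 0)*(t 1)^2*(s 0)^3) * hs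

set_option maxHeartbeats 1000000 in
lemma rod_map (s t : V3) (ht : t 0^2 + t 1^2 + t 2^2 = 1) (hs : s 0^2 + s 1^2 + s 2^2 = 1) (a : Fin 3) :
    rodT s t a 0 * s 0 + rodT s t a 1 * s 1 + rodT s t a 2 * s 2 = (1 + (t 0 * s 0 + t 1 * s 1 + t 2 * s 2)) * t a := by
  fin_cases a
  · simp only [rodT, Matrix.cons_val_zero, Matrix.cons_val_one, Matrix.head_cons, Matrix.cons_val_two, Matrix.tail_cons, Fin.zero_eta, Fin.mk_one, Fin.reduceFinMk]
    norm_num [Fin.ext_iff]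
    linear_combination ((-1)*(s 0) + (s 0)*(s 2)^2 + (s 0)*(s 1)^2 + (s 0)^3) * ht + ((s 0) + (-1)*(t 2)^2*(s 0) + (-1)*(t 1)^2*(s 0) + (t 0) + (t 0)*(t 2)*(s 2) + (t 0)*(t 1)*(s 1)) * hs
  · simp only [rodT, Matrix.cons_val_zero, Matrix.cons_val_one, Matrix.head_cons, Matrix.cons_val_two, Matrix.tail_cons, Fin.zero_eta, Fin.mk_one, Fin.reduceFinMk]
    norm_num [Fin.ext_iff]
    linear_combination (0) * ht + ((t 1) + (t 1)*(t 2)*(s 2) + (t 1)^2*(s 1) + (t 0)*(t 1)*(s 0)) * hs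
  · simp only [rodT, Matrix.cons_val_zero, Matrix.cons_val_one, Matrix.head_cons, Matrix.cons_val_two, Matrix.tail_cons, Fin.zero_eta, Fin.mk_one, Fin.reduceFinMk]
    norm_num [Fin.ext_iff]
    linear_combination (0) * ht + ((t 2) + (t 2)^2*(s 2) + (t 1)*(t 2)*(s 1) + (t 0)*(t 2)*(s 0)) * hs

set_option maxHeartbeats 1000000 in
lemma rod_norm (s t : V3) (ht : t 0^2 + t 1^2 + t 2^2 = 1) (hs : s 0^2 + s 1^2 + s 2^2 = 1) :
    (rodT s t 0 0 - (1 + (t 0 * s 0 + t 1 * s 1 + t 2 * s 2)))^2 + (rodT s t 1 0)^2 + (rodT s t 2 0)^2 + (rodT s t 0 1)^2 + (rodT s t 1 1 - (1 + (t 0 * s 0 + t 1 * s 1 + t 2 * s 2)))^2 + (rodT s t 2 1)^2 + (rodT s t 0 2)^2 + (rodT s t 1 2)^2 + (rodT s t 2 2 - (1 + (t 0 * s 0 + t 1 * s 1 + t 2 * s 2)))^2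
      = 2 * (1 + (t 0 * s 0 + t 1 * s 1 + t 2 * s 2))^2 * ((t 0 - s 0)^2 + (t 1 - s 1)^2 + (t 2 - s 2)^2) := by
  simp only [rodT, Matrix.cons_val_zero, Matrix.cons_val_one, Matrix.head_cons, Matrix.cons_val_two, Matrix.tail_cons, Fin.zero_eta, Fin.mk_one, Fin.reduceFinMk]
  linear_combination ((-2) + (s 2)^4 + (2)*(s 1)^2*(s 2)^2 + (s 1)^4 + (2)*(s 0)^2*(s 2)^2 + (2)*(s 0)^2*(s 1)^2 + (s 0)^4 + (-4)*(t 2)*(s 2) + (4)*(t 2)*(s 2)^3 + (4)*(t 2)*(s 1)^2*(s 2) + (4)*(t 2)*(s 0)^2*(s 2) + (-2)*(t 2)^2*(s 2)^2 + (3)*(t 2)^2*(s 2)^4 + (4)*(t 2)^2*(s 1)^2*(s 2)^2 + (t 2)^2*(s 1)^4 + (4)*(t 2)^2*(s 0)^2*(s 2)^2 + (2)*(t 2)^2*(s 0)^2*(s 1)^2 + (t 2)^2*(s 0)^4 + (-4)*(t 1)*(s 1) + (4)*(t 1)*(s 1)*(s 2)^2 + (4)*(t 1)*(s 1)^3 +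 (4)*(t 1)*(s 0)^2*(s 1) + (-4)*(t 1)*(t 2)*(s 1)*(s 2) + (4)*(t 1)*(t 2)*(s 1)*(s 2)^3 + (4)*(t 1)*(t 2)*(s 1)^3*(s 2) + (4)*(t 1)*(t 2)*(s 0)^2*(s 1)*(s 2) + (t 1)^2*(s 2)^4 + (-2)*(t 1)^2*(s 1)^2 + (4)*(t 1)^2*(s 1)^2*(s 2)^2 + (3)*(t 1)^2*(s 1)^4 + (2)*(t 1)^2*(s 0)^2*(s 2)^2 + (4)*(t 1)^2*(s 0)^2*(s 1)^2 + (t 1)^2*(s 0)^4 + (-4)*(t 0)*(s 0) + (4)*(t 0)*(s 0)*(s 2)^2 + (4)*(t 0)*(s 0)*(s 1)^2 + (4)*(t 0)*(s 0)^3 + (-4)*(t 0)*(t 2)*(s 0)*(s 2) + (4)*(t 0)*(t 2)*(s 0)*(s 2)^3 + (4)*(t 0)*(t 2)*(s 0)*(s 1)^2*(s 2) + (4)*(t 0)*(t 2)*(s 0)^3*(s 2) + (-4)*(t 0)*(t 1)*(s 0)*(s 1) + (4)*(t 0)*(t 1)*(s 0)*(s 1)*(s 2)^2 + (4)*(t 0)*(t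 1)*(s 0)*(s 1)^3 + (4)*(t 0)*(t 1)*(s 0)^3*(s 1) + (t 0)^2*(s 2)^4 + (2)*(t 0)^2*(s 1)^2*(s 2)^2 + (t 0)^2*(s 1)^4 + (-2)*(t 0)^2*(s 0)^2 + (4)*(t 0)^2*(s 0)^2*(s 2)^2 + (4)*(t 0)^2*(s 0)^2*(s 1)^2 + (3)*(t 0)^2*(s 0)^4) * ht + ((-1) + (s 2)^2 + (s 1)^2 + (s 0)^2) * hs

lemma orth_flip {Q : Mat3} (h : mmul (mtrans Q) Q = idM) : mmul Q (mtrans Q) = idM := by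
  have key : (Matrix.of (mtrans Q)) * (Matrix.of Q) = 1 := by
    ext i j
    have := congrFun (congrFun h i) j
    simpa [Matrix.mul_apply, mmul, Matrix.one_apply, idM] using this
  have key2 := mul_eq_one_comm.mp key
  funext i j
  have := congrFun (congrFun key2 i) j
  simpa [Matrix.mul_apply, mmul, Matrix.one_apply, idM] using this

lemma mtrans_mmul (A B : Mat3) : mtrans (mmul A B) = mmul (mtrans B) (mtrans A) := by
  funext i j
  simp [mtrans, mmul, Fin.sum_univ_three]; ring

lemma mvmul_mmul (A B : Mat3) (v : V3) : mvmul (mmul A B) v = mvmul A (mvmul B v) := by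
  funext i
  simp [mvmul, mmul, Fin.sum_univ_three]; ring

lemma left_orth_norm {Q : Mat3} (h : mmul (mtrans Q) Q = idM) (A : Mat3) :
    ∑ i, ∑ j, (mmul Q A i j) ^ 2 = ∑ i, ∑ j, (A i j) ^ 2 := by
  calc ∑ i, ∑ j, (mmul Q A i j)^2 = ∑ j, ∑ i, (mmul Q A i j)^2 := Finset.sum_comm
    _ = ∑ j, ∑ i, (A i j)^2 := Finset.sum_congr rfl fun j _ =>
          (by simpa [mvmul, mmul] using mvmul_norm_sq h (fun k => A k j))
    _ = ∑ i, ∑ j, (A i j)^2 := Finset.sum_comm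

set_option maxHeartbeats 1600000 in
lemma exists_perp (s t : V3) (hs' : s 0^2 + s 1^2 + s 2^2 = 1) (ht' : t 0^2 + t 1^2 + t 2^2 = 1)
    (hc : t 0 * s 0 + t 1 * s 1 + t 2 * s 2 < -1/2) :
    ∃ u : V3, (u 0^2 + u 1^2 + u 2^2 = 1) ∧ (u 0 * s 0 + u 1 * s 1 + u 2 * s 2 = 0) ∧
      (u 0 * t 0 + u 1 * t 1 + u 2 * t 2 = 0) := by
  by_cases hw : (s 1 * t 2 - s 2 * t 1)^2 + (s 2 * t 0 - s 0 * t 2)^2 + (s 0 * t 1 - s 1 * t 0)^2 = 0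
  · have h0 : s 1 * t 2 - s 2 * t 1 = 0 := by nlinarith [sq_nonneg (s 1 * t 2 - s 2 * t 1), sq_nonneg (s 2 * t 0 - s 0 * t 2), sq_nonneg (s 0 * t 1 - s 1 * t 0)]
    have h1 : s 2 * t 0 - s 0 * t 2 = 0 := by nlinarith [sq_nonneg (s 1 * t 2 - s 2 * t 1), sq_nonneg (s 2 * t 0 - s 0 * t 2), sq_nonneg (s 0 * t 1 - s 1 * t 0)]
    have h2 : s 0 * t 1 - s 1 * t 0 = 0 := by nlinarith [sq_nonneg (s 1 * t 2 - s 2 * t 1), sq_nonneg (s 2 * t 0 - s 0 * t 2), sq_nonneg (s 0 * t 1 - s 1 * t 0)]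
    set c := t 0 * s 0 + t 1 * s 1 + t 2 * s 2 with hcdef
    have hct0 : t 0 = c * s 0 := by rw [hcdef]; linear_combination (-(t 0)) * hs' + (- s 1) * h2 + s 2 * h1
    have hct1 : t 1 = c * s 1 := by rw [hcdef]; linear_combination (-(t 1)) * hs' + s 0 * h2 + (- s 2) * h0
    have hct2 : t 2 = c * s 2 := by rw [hcdef]; linear_combination (-(t 2)) * hs' + (- s 0) * h1 + s 1 * h0
    have hc2 : (c + 1) * (c - 1) = 0 := by
      linear_combination (- (t 0 + c * s 0)) * hct0 + (- (t 1 + c * s 1)) * hct1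
        + (- (t 2 + c * s 2)) * hct2 + (- c^2) * hs' + ht'
    have hcm : c = -1 := by
      rcases mul_eq_zero.mp hc2 with h | h
      · linarith
      · exfalso; linarith
    have hT0 : t 0 = -s 0 := by rw [hct0, hcm]; ring
    have hT1 : t 1 = -s 1 := by rw [hct1, hcm]; ring
    have hT2 : t 2 = -s 2 := by rw [hct2, hcm]; ring
    by_cases hs01 : s 0^2 + s 1^2 = 0
    · have hs0 : s 0 = 0 := by nlinarith [sq_nonneg (s 0), sq_nonneg (s 1)]
      have hs1 : s 1 = 0 := by nlinarith [sq_nonneg (s 0), sq_nonneg (s 1)]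
      refine ⟨![1, 0, 0], by norm_num; simp, ?_, ?_⟩
      · simp [hs0]
      · simp [hT0, hs0]
    · have hr0 : (0:ℝ) < s 0^2 + s 1^2 := by
        rcases lt_or_eq_of_le (by positivity : (0:ℝ) ≤ s 0^2 + s 1^2) with h | h
        · exact h
        · exact absurd h.symm hs01
      set r := Real.sqrt (s 0^2 + s 1^2) with hrdef
      have hr2 : r^2 = s 0^2 + s 1^2 := Real.sq_sqrt (le_of_lt hr0)
      have hrne : r ≠ 0 := by
        intro h; rw [h] at hr2; simp at hr2; linarith
      refine ⟨![-(s 1)/r, s 0/r, 0], ?_, ?_, ?_⟩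
      · show (-(s 1)/r)^2 + (s 0/r)^2 + 0^2 = 1
        field_simp
        linear_combination - hr2
      · show (-(s 1)/r) * s 0 + (s 0/r) * s 1 + 0 * s 2 = 0
        field_simp
        ring
      · show (-(s 1)/r) * t 0 + (s 0/r) * t 1 + 0 * t 2 = 0
        rw [hT0, hT1]
        field_simp
        ring
  · have hwpos : (0:ℝ) < (s 1 * t 2 - s 2 * t 1)^2 + (s 2 * t 0 - s 0 * t 2)^2 + (s 0 * t 1 - s 1 * t 0)^2 := by
      rcases lt_or_eq_of_le (by positivity : (0:ℝ) ≤ (s 1 * t 2 - s 2 * t 1)^2 + (s 2 * t 0 - s 0 * t 2)^2 + (s 0 * t 1 - s 1 * t 0)^2) with h | h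
      · exact h
      · exact absurd h.symm hw
    set r := Real.sqrt ((s 1 * t 2 - s 2 * t 1)^2 + (s 2 * t 0 - s 0 * t 2)^2 + (s 0 * t 1 - s 1 * t 0)^2) with hrdef
    have hr2 : r^2 = (s 1 * t 2 - s 2 * t 1)^2 + (s 2 * t 0 - s 0 * t 2)^2 + (s 0 * t 1 - s 1 * t 0)^2 :=
      Real.sq_sqrt (le_of_lt hwpos)
    have hrne : r ≠ 0 := by
      intro h; rw [h] at hr2; simp at hr2; linarith
    refine ⟨![(s 1 * t 2 - s 2 * t 1)/r, (s 2 * t 0 - s 0 * t 2)/r, (s 0 * t 1 - s 1 * t 0)/r], ?_, ?_, ?_⟩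
    · show ((s 1 * t 2 - s 2 * t 1)/r)^2 + ((s 2 * t 0 - s 0 * t 2)/r)^2 + ((s 0 * t 1 - s 1 * t 0)/r)^2 = 1
      field_simp
      linear_combination - hr2
    · show ((s 1 * t 2 - s 2 * t 1)/r) * s 0 + ((s 2 * t 0 - s 0 * t 2)/r) * s 1 + ((s 0 * t 1 - s 1 * t 0)/r) * s 2 = 0
      field_simp
      ring
    · show ((s 1 * t 2 - s 2 * t 1)/r) * t 0 + ((s 2 * t 0 - s 0 * t 2)/r) * t 1 + ((s 0 * t 1 - s 1 * t 0)/r) * t 2 = 0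
      field_simp
      ring

set_option maxHeartbeats 1600000 in
lemma rot_generic (s t : V3) (ht : t 0^2 + t 1^2 + t 2^2 = 1) (hs : s 0^2 + s 1^2 + s 2^2 = 1)
    (hd : (1 + (t 0 * s 0 + t 1 * s 1 + t 2 * s 2)) ≠ 0) :
    ∃ S, S ∈ SO3 ∧ mvmul S s = t ∧
      (∑ i, ∑ j, (mtrans S i j - idM i j)^2) = 2 * ∑ i, (t i - s i)^2 := by
  refine ⟨fun i j => rodT s t i j / (1 + (t 0 * s 0 + t 1 * s 1 + t 2 * s 2)), ⟨?_, ?_⟩, ?_, ?_⟩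
  · funext a b
    have h := rod_orth s t ht hs a b
    simp only [mmul, mtrans, idM, Fin.sum_univ_three]
    rcases eq_or_ne a b with hab | hab
    · rw [if_pos hab]; rw [if_pos hab] at h; field_simp; linear_combination h
    · rw [if_neg hab]; rw [if_neg hab] at h; field_simp; linear_combination h
  · show (Matrix.of _).det = 1
    rw [Matrix.det_fin_three]
    simp only [Matrix.of_apply]
    have h := rod_det s t ht hs
    field_simp
    linear_combination h
  · funext a
    have h := rod_map s t ht hs a
    simp only [mvmul, Fin.sum_univ_three]
    field_simp
    linear_combination h
  · have h := rod_norm s t ht hs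
    simp only [mtrans, idM, Fin.sum_univ_three]
    norm_num [Fin.ext_iff]
    field_simp
    linear_combination h

lemma sum_sq_expand (t s : V3) (ht : t 0^2 + t 1^2 + t 2^2 = 1) (hs : s 0^2 + s 1^2 + s 2^2 = 1) :
    ∑ i, (t i - s i)^2 = 2 - 2 * (t 0 * s 0 + t 1 * s 1 + t 2 * s 2) := by
  simp only [Fin.sum_univ_three]; linear_combination ht + hs

set_option maxHeartbeats 1600000 in
lemma exists_rot (s t : V3) (hs : s 0^2 + s 1^2 + s 2^2 = 1) (ht : t 0^2 + t 1^2 + t 2^2 = 1) :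
    ∃ S, S ∈ SO3 ∧ mvmul S s = t ∧
      (∑ i, ∑ j, (mtrans S i j - idM i j)^2) ≤ 6 * ∑ i, (t i - s i)^2 := by
  by_cases hc : -1/2 ≤ t 0 * s 0 + t 1 * s 1 + t 2 * s 2
  · have hd : (1 + (t 0 * s 0 + t 1 * s 1 + t 2 * s 2)) ≠ 0 := by
      intro h; linarith
    obtain ⟨S, h1, h2, h3⟩ := rot_generic s t ht hs hd
    refine ⟨S, h1, h2, ?_⟩
    rw [h3]
    have hpos : (0:ℝ) ≤ ∑ i, (t i - s i)^2 := by positivity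
    linarith
  · push_neg at hc
    obtain ⟨u, hu, hus, hut⟩ := exists_perp s t hs ht hc
    have hd1 : (1 + (u 0 * s 0 + u 1 * s 1 + u 2 * s 2)) ≠ 0 := by rw [hus]; norm_num
    have hd2 : (1 + (t 0 * u 0 + t 1 * u 1 + t 2 * u 2)) ≠ 0 := by
      have : t 0 * u 0 + t 1 * u 1 + t 2 * u 2 = 0 := by linarith [hut]
      rw [this]; norm_num
    obtain ⟨S1, hS1, hS1m, hS1n⟩ := rot_generic s u hu hs hd1
    obtain ⟨S2, hS2, hS2m, hS2n⟩ := rot_generic u t ht hu hd2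
    refine ⟨mmul S2 S1, SO3_mul_mem hS2 hS1, by rw [mvmul_mmul, hS1m, hS2m], ?_⟩
    -- norm bound
    have hflip : mmul S1 (mtrans S1) = idM := orth_flip hS1.1
    have key : ∀ i j, mtrans (mmul S2 S1) i j - idM i j
        = mmul (mtrans S1) (fun a b => mtrans S2 a b - idM a b) i j + (mtrans S1 i j - idM i j) := by
      intro i j
      simp only [mmul, mtrans, idM]
      have h1 : ∑ k, S1 k i * (S2 j k - if k = j then (1:ℝ) else 0)
          = (∑ k, S1 k i * S2 j k) - S1 j i := by
        simp only [mul_sub]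
        rw [Finset.sum_sub_distrib]
        congr 1
        simp [mul_ite]
      rw [show (∑ k, S2 j k * S1 k i) = ∑ k, S1 k i * S2 j k from
        Finset.sum_congr rfl fun k _ => mul_comm _ _, h1]
      ring
    have hXn : ∑ i, ∑ j, (mmul (mtrans S1) (fun a b => mtrans S2 a b - idM a b) i j)^2
        = ∑ i, ∑ j, (mtrans S2 i j - idM i j)^2 := by
      refine left_orth_norm ?_ _
      show mmul (mtrans (mtrans S1)) (mtrans S1) = idM
      have : mtrans (mtrans S1) = S1 := by funext i j; simp [mtrans]
      rw [this]; exact hflip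
    have hsum : ∀ i j, (mtrans (mmul S2 S1) i j - idM i j)^2
        ≤ 2 * (mmul (mtrans S1) (fun a b => mtrans S2 a b - idM a b) i j)^2 + 2 * (mtrans S1 i j - idM i j)^2 := by
      intro i j
      rw [key i j]
      nlinarith [sq_nonneg (mmul (mtrans S1) (fun a b => mtrans S2 a b - idM a b) i j - (mtrans S1 i j - idM i j))]
    have hle : ∑ i, ∑ j, (mtrans (mmul S2 S1) i j - idM i j)^2
        ≤ 2 * (∑ i, ∑ j, (mmul (mtrans S1) (fun a b => mtrans S2 a b - idM a b) i j)^2)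
          + 2 * (∑ i, ∑ j, (mtrans S1 i j - idM i j)^2) := by
      rw [Finset.mul_sum, Finset.mul_sum, ← Finset.sum_add_distrib]
      refine Finset.sum_le_sum fun i _ => ?_
      rw [Finset.mul_sum, Finset.mul_sum, ← Finset.sum_add_distrib]
      exact Finset.sum_le_sum fun j _ => hsum i j
    rw [hXn, hS2n, hS1n] at hle
    have e1 : ∑ i, (t i - u i)^2 = 2 := by
      rw [sum_sq_expand t u ht hu]; linarith [hut]
    have e2 : ∑ i, (u i - s i)^2 = 2 := by
      rw [sum_sq_expand u s hu hs]; linarith [hus]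
    have e3 : ∑ i, (t i - s i)^2 = 2 - 2 * (t 0 * s 0 + t 1 * s 1 + t 2 * s 2) :=
      sum_sq_expand t s ht hs
    rw [e1, e2] at hle
    rw [e3]
    linarith

section CB
variable (Cb : Mat3 → Mat3 → ℝ)
variable (hsymm : ∀ F G, Cb F G = Cb G F) (hlin : ∀ F, IsLinearMap ℝ (Cb F))

include hsymm hlin in
lemma cb_expand (F G : Mat3) :
    Cb (F + G) (F + G) = Cb F F + 2 * Cb F G + Cb G G := by
  rw [(hlin (F + G)).map_add, hsymm (F + G) F, hsymm (F + G) G,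
    (hlin F).map_add, (hlin G).map_add, hsymm G F]
  ring

include hsymm hlin in
lemma cb_smul_expand (F G : Mat3) (x : ℝ) :
    Cb (F + x • G) (F + x • G) = Cb G G * x ^ 2 + 2 * Cb F G * x + Cb F F := by
  rw [(hlin (F + x • G)).map_add, (hlin (F + x • G)).map_smul,
    hsymm (F + x • G) F, hsymm (F + x • G) G,
    (hlin F).map_add, (hlin F).map_smul, (hlin G).map_add, (hlin G).map_smul, hsymm G F]
  simp only [smul_eq_mul]
  ring

include hsymm hlin in
lemma cb_cs (hpos : ∀ F, 0 ≤ Cb F F) (F G : Mat3) : Cb F G ^ 2 ≤ Cb F F * Cb G G := by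
  have h : ∀ x : ℝ, 0 ≤ Cb G G * (x * x) + 2 * Cb F G * x + Cb F F := by
    intro x
    have := cb_smul_expand Cb hsymm hlin F G x
    nlinarith [hpos (F + x • G), this]
  have hd := discrim_le_zero h
  rw [discrim] at hd
  nlinarith [hd]

-- Frobenius submultiplicativity (squared form)
lemma mnorm_mmul_sq_le (A B : Mat3) :
    (∑ i, ∑ j, (mmul A B i j) ^ 2) ≤ (∑ i, ∑ j, (A i j) ^ 2) * (∑ i, ∑ j, (B i j) ^ 2) := by
  have step1 : ∀ i j : Fin 3, (mmul A B i j) ^ 2 ≤ (∑ k, (A i k) ^ 2) * (∑ k, (B k j) ^ 2) := by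
    intro i j
    have := Finset.sum_mul_sq_le_sq_mul_sq Finset.univ (fun k => A i k) (fun k => B k j)
    simpa [mmul] using this
  calc (∑ i, ∑ j, (mmul A B i j) ^ 2)
      ≤ ∑ i, ∑ j, ((∑ k, (A i k) ^ 2) * (∑ k, (B k j) ^ 2)) :=
        Finset.sum_le_sum fun i _ => Finset.sum_le_sum fun j _ => step1 i j
    _ = (∑ i, ∑ k, (A i k) ^ 2) * (∑ j, ∑ k, (B k j) ^ 2) := by
        rw [Finset.sum_mul]
        exact Finset.sum_congr rfl fun i _ => by rw [← Finset.mul_sum]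
    _ = (∑ i, ∑ j, (A i j) ^ 2) * (∑ i, ∑ j, (B i j) ^ 2) := by
        congr 1
        exact Finset.sum_comm
end CB

section CB2
variable (Cb : Mat3 → Mat3 → ℝ)
variable (hsymm : ∀ F G, Cb F G = Cb G F) (hlin : ∀ F, IsLinearMap ℝ (Cb F))

include hsymm hlin in
lemma cb_pointwise (cl cu : ℝ) (hcl : 0 < cl) (hcu : 0 < cu)
    (hbounds : ∀ F, cl * mnorm F ^ 2 ≤ Cb F F ∧ Cb F F ≤ cu * mnorm F ^ 2)
    {S : Mat3} (hS : mmul (mtrans S) S = idM) (M : Mat3) :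
    Cb (mmul M (mtrans S)) (mmul M (mtrans S))
      ≤ (1 + Real.sqrt (cu/cl) * mnorm (mtrans S - idM)) ^ 2 * Cb M M := by
  set K := Real.sqrt (cu/cl) with hK
  set m := mnorm (mtrans S - idM) with hm
  have hK0 : 0 ≤ K := Real.sqrt_nonneg _
  have hm0 : 0 ≤ m := mnorm_nonneg _
  have hK2 : K ^ 2 = cu / cl := Real.sq_sqrt (by positivity)
  have hm2 : m ^ 2 = ∑ i, ∑ j, ((mtrans S - idM) i j) ^ 2 := mnorm_sq _
  have hpos : ∀ F, 0 ≤ Cb F F := fun F => le_trans (by positivity) (hbounds F).1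
  set D : Mat3 := mmul M (mtrans S - idM) with hD
  have hN : mmul M (mtrans S) = M + D := by
    funext i j
    simp only [hD, mmul, Pi.add_apply, Pi.sub_apply, idM, mtrans]
    have h1 : ∑ k, M i k * (S j k - if k = j then (1:ℝ) else 0)
        = (∑ k, M i k * S j k) - M i j := by
      simp only [mul_sub]
      rw [Finset.sum_sub_distrib]
      congr 1
      simp [mul_ite]
    rw [h1]; ring
  have ha0 : 0 ≤ Cb M M := hpos M
  have hMsq : cl * (∑ i, ∑ j, (M i j)^2) ≤ Cb M M := by
    have := (hbounds M).1; rwa [mnorm_sq] at this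
  have hDsq : Cb D D ≤ cu * (∑ i, ∑ j, (D i j)^2) := by
    have := (hbounds D).2; rwa [mnorm_sq] at this
  have hsub : (∑ i, ∑ j, (D i j)^2) ≤ (∑ i, ∑ j, (M i j)^2) * (∑ i, ∑ j, ((mtrans S - idM) i j)^2) := by
    rw [hD]; exact mnorm_mmul_sq_le M _
  have hDb : Cb D D ≤ K^2 * m^2 * Cb M M := by
    rw [hK2, hm2]
    have hSM : 0 ≤ ∑ i, ∑ j, ((mtrans S - idM) i j)^2 := by positivity
    have t1 : Cb D D ≤ cu * ((∑ i, ∑ j, (M i j)^2) * (∑ i, ∑ j, ((mtrans S - idM) i j)^2)) := by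
      nlinarith [hDsq, hsub, hcu.le]
    have t2 : cu * ((∑ i, ∑ j, (M i j)^2) * (∑ i, ∑ j, ((mtrans S - idM) i j)^2))
        ≤ cu / cl * (∑ i, ∑ j, ((mtrans S - idM) i j)^2) * Cb M M := by
      rw [div_mul_eq_mul_div, div_mul_eq_mul_div, le_div_iff₀ hcl]
      nlinarith [mul_le_mul_of_nonneg_left hMsq (mul_nonneg hcu.le hSM)]
    linarith
  have hCS : (Cb M D)^2 ≤ Cb M M * Cb D D := cb_cs Cb hsymm hlin hpos M D
  have hMD : Cb M D ≤ K * m * Cb M M := by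
    have h1 : (Cb M D)^2 ≤ (K * m * Cb M M)^2 := by
      have h2 : Cb M M * Cb D D ≤ Cb M M * (K^2*m^2*Cb M M) :=
        mul_le_mul_of_nonneg_left hDb ha0
      nlinarith [hCS, h2]
    nlinarith [h1, mul_nonneg (mul_nonneg hK0 hm0) ha0]
  rw [hN, cb_expand Cb hsymm hlin M D]
  nlinarith [hMD, hDb, hm0, hK0, ha0, mul_nonneg (mul_nonneg hK0 hm0) ha0]
end CB2

def basM (p : Fin 3 × Fin 3) : Mat3 := fun i j => if i = p.1 ∧ j = p.2 then 1 else 0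

lemma mat_decomp (M : Mat3) : M = ∑ p : Fin 3 × Fin 3, M p.1 p.2 • basM p := by
  funext i j
  rw [Finset.sum_apply, Finset.sum_apply]
  simp only [Pi.smul_apply, basM, smul_eq_mul, mul_ite, mul_one, mul_zero]
  rw [Finset.sum_eq_single (i, j)]
  · simp
  · rintro ⟨a, b⟩ _ hp
    rw [if_neg]
    rintro ⟨h1, h2⟩
    exact hp (by rw [Prod.ext_iff]; exact ⟨h1.symm, h2.symm⟩)
  · intro h; exact absurd (Finset.mem_univ _) h

section CB3
variable (Cb : Mat3 → Mat3 → ℝ)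
variable (hsymm : ∀ F G, Cb F G = Cb G F) (hlin : ∀ F, IsLinearMap ℝ (Cb F))

include hlin in
lemma cb_sum_right (M : Mat3) {ι : Type*} (s : Finset ι) (c : ι → ℝ) (A : ι → Mat3) :
    Cb M (∑ x ∈ s, c x • A x) = ∑ x ∈ s, c x * Cb M (A x) := by
  have L : Mat3 →ₗ[ℝ] ℝ := IsLinearMap.mk' _ (hlin M)
  calc Cb M (∑ x ∈ s, c x • A x) = (IsLinearMap.mk' _ (hlin M)) (∑ x ∈ s, c x • A x) := rfl
    _ = ∑ x ∈ s, c x * (IsLinearMap.mk' _ (hlin M)) (A x) := by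
        rw [map_sum]
        exact Finset.sum_congr rfl fun x _ => by
          rw [LinearMap.map_smul]; simp
    _ = ∑ x ∈ s, c x * Cb M (A x) := rfl

include hsymm hlin in
lemma cb_rep (M N : Mat3) :
    Cb M N = ∑ q : Fin 3 × Fin 3, ∑ p : Fin 3 × Fin 3,
      N q.1 q.2 * (M p.1 p.2 * Cb (basM q) (basM p)) := by
  conv_lhs => rw [show N = ∑ q : Fin 3 × Fin 3, N q.1 q.2 • basM q from mat_decomp N]
  rw [cb_sum_right Cb hlin]
  refine Finset.sum_congr rfl fun q _ => ?_
  rw [show Cb M (basM q) = ∑ p : Fin 3 × Fin 3, M p.1 p.2 * Cb (basM q) (basM p) from by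
    rw [hsymm]
    conv_lhs => rw [show M = ∑ p : Fin 3 × Fin 3, M p.1 p.2 • basM p from mat_decomp M]
    rw [cb_sum_right Cb hlin], Finset.mul_sum]

include hsymm hlin in
lemma cb_diag_continuous : Continuous (fun M : Mat3 => Cb M M) := by
  have h : (fun M : Mat3 => Cb M M) = fun M => ∑ q : Fin 3 × Fin 3, ∑ p : Fin 3 × Fin 3,
      M q.1 q.2 * (M p.1 p.2 * Cb (basM q) (basM p)) := funext fun M => cb_rep Cb hsymm hlin M M
  rw [h]
  refine continuous_finset_sum _ fun q _ => continuous_finset_sum _ fun p _ => ?_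
  fun_prop

include hlin in
lemma cb_zero : Cb 0 0 = 0 := by
  calc Cb 0 0 = Cb 0 ((0:ℝ) • (0 : Mat3)) := by norm_num
    _ = 0 := by rw [(hlin 0).map_smul]; simp
end CB3

lemma er_cont (k : Fin 3) : Continuous (fun θ : ℝ => er θ k) := by
  fin_cases k <;> simp [er] <;> fun_prop

lemma mvmul_er_cont (Q : Mat3) (j : Fin 3) : Continuous (fun θ : ℝ => mvmul Q (er θ) j) := by
  simp only [mvmul]
  exact continuous_finset_sum _ fun k _ => continuous_const.mul (er_cont k)

lemma Gmat_cont (Q : Mat3) (g : V3) :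
    Continuous (fun pr : V3 × ℝ => outer pr.1 (mvmul Q e3) + outer g (mvmul Q (er pr.2))) := by
  refine continuous_pi fun i => continuous_pi fun j => ?_
  simp only [Pi.add_apply, outer]
  exact (((continuous_apply i).comp continuous_fst).mul continuous_const).add
    (continuous_const.mul ((mvmul_er_cont Q j).comp continuous_snd))

lemma Gmat_aesm {μ : MeasureTheory.Measure ℝ} {f : ℝ → V3}
    (hf : MeasureTheory.AEStronglyMeasurable f μ) (Q : Mat3) (g : V3) :
    MeasureTheory.AEStronglyMeasurable
      (fun θ => outer (f θ) (mvmul Q e3) + outer g (mvmul Q (er θ))) μ := by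
  have h2 : MeasureTheory.AEStronglyMeasurable (fun θ => (f θ, θ)) μ :=
    hf.prodMk aestronglyMeasurable_id
  exact (Gmat_cont Q g).comp_aestronglyMeasurable h2

lemma mmul_cont (S : Mat3) : Continuous (fun M : Mat3 => mmul M S) := by
  refine continuous_pi fun i => continuous_pi fun j => ?_
  simp only [mmul]
  exact continuous_finset_sum _ fun k _ => by
    fun_prop

-- norm bound for competitor matrices
lemma G_norm_bound {Q : Mat3} (hQ : mmul (mtrans Q) Q = idM) (u w : V3) (θ : ℝ) :
    ∑ i, ∑ j, ((outer u (mvmul Q e3) + outer w (mvmul Q (er θ))) i j)^2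
      ≤ 2 * (∑ i, (u i)^2) + 2 * (∑ i, (w i)^2) := by
  have he3 : ∑ j, (mvmul Q e3 j)^2 = 1 := by
    rw [mvmul_norm_sq hQ]; norm_num [e3, Fin.sum_univ_three]; simp
  have her : ∑ j, (mvmul Q (er θ) j)^2 = 1 := by
    rw [mvmul_norm_sq hQ]
    simp only [er, Fin.sum_univ_three, Matrix.cons_val_zero, Matrix.cons_val_one,
      Matrix.head_cons, Matrix.cons_val_two, Matrix.tail_cons]
    nlinarith [Real.sin_sq_add_cos_sq θ]
  have h1 : ∀ i j : Fin 3, ((outer u (mvmul Q e3) + outer w (mvmul Q (er θ))) i j)^2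
      ≤ 2 * (u i)^2 * (mvmul Q e3 j)^2 + 2 * (w i)^2 * (mvmul Q (er θ) j)^2 := by
    intro i j
    simp only [Pi.add_apply, outer]
    nlinarith [sq_nonneg (u i * mvmul Q e3 j - w i * mvmul Q (er θ) j)]
  calc ∑ i, ∑ j, ((outer u (mvmul Q e3) + outer w (mvmul Q (er θ))) i j)^2
      ≤ ∑ i, ∑ j, (2 * (u i)^2 * (mvmul Q e3 j)^2 + 2 * (w i)^2 * (mvmul Q (er θ) j)^2) :=
        Finset.sum_le_sum fun i _ => Finset.sum_le_sum fun j _ => h1 i j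
    _ = ∑ i : Fin 3, (2 * (u i)^2 * (∑ j, (mvmul Q e3 j)^2) + 2 * (w i)^2 * (∑ j, (mvmul Q (er θ) j)^2)) := by
        refine Finset.sum_congr rfl fun i _ => ?_
        rw [Finset.sum_add_distrib, ← Finset.mul_sum, ← Finset.mul_sum]
    _ = ∑ i : Fin 3, (2 * (u i)^2 + 2 * (w i)^2) := by
        rw [he3, her]; simp
    _ = 2 * (∑ i, (u i)^2) + 2 * (∑ i, (w i)^2) := by
        rw [Finset.sum_add_distrib, ← Finset.mul_sum, ← Finset.mul_sum]

lemma mmul_add_left (A B C : Mat3) : mmul (A + B) C = mmul A C + mmul B C := by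
  funext i j
  simp [mmul, Pi.add_apply, Fin.sum_univ_three]; ring

lemma outer_mmul (u : V3) (S : Mat3) (v : V3) :
    outer u (mvmul S v) = mmul (outer u v) (mtrans S) := by
  funext i j
  simp [outer, mmul, mvmul, mtrans, Fin.sum_univ_three]; ring

lemma G_transport (S Q : Mat3) (u g : V3) (θ : ℝ) :
    outer u (mvmul (mmul S Q) e3) + outer g (mvmul (mmul S Q) (er θ))
      = mmul (outer u (mvmul Q e3) + outer g (mvmul Q (er θ))) (mtrans S) := by
  rw [mvmul_mmul, mvmul_mmul, outer_mmul u S, outer_mmul g S, mmul_add_left]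

-- === auxiliary sets ===
def Qset (Cb : Mat3 → Mat3 → ℝ) (Qt : Mat3) (b : V3) : Set ℝ :=
  {E | ∃ f : ℝ → V3, ∃ g : V3,
    Integrable (fun θ => vnorm (f θ) ^ 2) (volume.restrict (Set.Ioo 0 (2 * Real.pi))) ∧
    (∫ θ in (0:ℝ)..(2 * Real.pi), f θ) = b ∧
    E = ∫ θ in (0:ℝ)..(2 * Real.pi),
      (1 / 2) * Cb (outer (f θ) (mvmul Qt e3) + outer g (mvmul Qt (er θ)))
        (outer (f θ) (mvmul Qt e3) + outer g (mvmul Qt (er θ)))}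

lemma Psi0Q_eq (Cb : Mat3 → Mat3 → ℝ) (Qt : Mat3) (b : V3) :
    Psi0Q Cb Qt b = sInf (Qset Cb Qt b) := rfl

def Tset (Cb : Mat3 → Mat3 → ℝ) (b t : V3) : Set ℝ :=
  {E | ∃ Qt ∈ SO3, mvmul Qt e3 = t ∧ E = Psi0Q Cb Qt b}

lemma Psi0_eq (Cb : Mat3 → Mat3 → ℝ) (b t : V3) :
    Psi0 Cb b t = sInf (Tset Cb b t) := rfl

section FINAL
variable (Cb : Mat3 → Mat3 → ℝ)
variable (hsymm : ∀ F G, Cb F G = Cb G F) (hlin : ∀ F, IsLinearMap ℝ (Cb F))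

include hsymm in
lemma Qset_nonneg (hpos : ∀ F, 0 ≤ Cb F F) (Qt : Mat3) (b : V3) :
    ∀ E ∈ Qset Cb Qt b, 0 ≤ E := by
  rintro E ⟨f, g, hfi, hfc, rfl⟩
  apply intervalIntegral.integral_nonneg_of_forall (by positivity)
  intro u
  exact mul_nonneg (by norm_num) (hpos _)

lemma Qset_nonempty (Qt : Mat3) (b : V3) : (Qset Cb Qt b).Nonempty := by
  refine ⟨_, fun _ => (1/(2*Real.pi)) • b, 0, ?_, ?_, rfl⟩
  · exact integrableOn_const measure_Ioo_lt_top.ne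
  · rw [intervalIntegral.integral_const, smul_smul]
    have h : (2*Real.pi - 0) * (1/(2*Real.pi)) = 1 := by
      field_simp
      simp
    rw [h, one_smul]

include hsymm hlin in
lemma Qset_compare (cl cu : ℝ) (hcl : 0 < cl) (hcu : 0 < cu)
    (hbounds : ∀ F, cl * mnorm F ^ 2 ≤ Cb F F ∧ Cb F F ≤ cu * mnorm F ^ 2)
    (b : V3) (hb : b ≠ 0) {S Q : Mat3}
    (hS : mmul (mtrans S) S = idM) (hQ : mmul (mtrans Q) Q = idM)
    (hQ2 : mmul (mtrans (mmul S Q)) (mmul S Q) = idM) :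
    ∀ E' ∈ Qset Cb Q b, ∃ E ∈ Qset Cb (mmul S Q) b,
      E ≤ (1 + Real.sqrt (cu/cl) * mnorm (mtrans S - idM))^2 * E' := by
  rintro E' ⟨f, g, hfi, hfc, rfl⟩
  set κ := (1 + Real.sqrt (cu/cl) * mnorm (mtrans S - idM))^2 with hκdef
  have hκ0 : 0 ≤ κ := sq_nonneg _
  refine ⟨_, ⟨f, g, hfi, hfc, rfl⟩, ?_⟩
  have hpos : ∀ F, 0 ≤ Cb F F := fun F => le_trans (by positivity) (hbounds F).1
  have hpt : ∀ θ, (1/2) * Cb (outer (f θ) (mvmul (mmul S Q) e3) + outer g (mvmul (mmul S Q) (er θ)))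
        (outer (f θ) (mvmul (mmul S Q) e3) + outer g (mvmul (mmul S Q) (er θ)))
      ≤ κ * ((1/2) * Cb (outer (f θ) (mvmul Q e3) + outer g (mvmul Q (er θ)))
        (outer (f θ) (mvmul Q e3) + outer g (mvmul Q (er θ)))) := by
    intro θ
    rw [G_transport S Q (f θ) g θ]
    have h := cb_pointwise Cb hsymm hlin cl cu hcl hcu hbounds hS
      (outer (f θ) (mvmul Q e3) + outer g (mvmul Q (er θ)))
    rw [hκdef]
    linarith [h]
  have hfInt : IntervalIntegrable f volume 0 (2*Real.pi) := by
    by_contra hcon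
    rw [intervalIntegral.integral_undef hcon] at hfc
    exact hb hfc.symm
  have hfm : AEStronglyMeasurable f (volume.restrict (Set.Ioc 0 (2*Real.pi))) :=
    hfInt.1.aestronglyMeasurable
  have hfi' : Integrable (fun θ => vnorm (f θ) ^ 2) (volume.restrict (Set.Ioc 0 (2*Real.pi))) := by
    rwa [← Measure.restrict_congr_set Ioo_ae_eq_Ioc]
  have hdomi : Integrable (fun θ => cu * (vnorm (f θ)^2 + vnorm g^2))
      (volume.restrict (Set.Ioc 0 (2*Real.pi))) := by
    apply Integrable.const_mul
    exact hfi'.add (integrableOn_const measure_Ioc_lt_top.ne)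
  have hGb : ∀ (R : Mat3), mmul (mtrans R) R = idM → ∀ θ,
      |(1/2) * Cb (outer (f θ) (mvmul R e3) + outer g (mvmul R (er θ)))
        (outer (f θ) (mvmul R e3) + outer g (mvmul R (er θ)))|
      ≤ cu * (vnorm (f θ)^2 + vnorm g^2) := by
    intro R hR θ
    rw [abs_of_nonneg (mul_nonneg (by norm_num) (hpos _))]
    have h1 := (hbounds (outer (f θ) (mvmul R e3) + outer g (mvmul R (er θ)))).2
    have h2 : mnorm (outer (f θ) (mvmul R e3) + outer g (mvmul R (er θ)))^2
        ≤ 2*(∑ i, (f θ i)^2) + 2*(∑ i, (g i)^2) := by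
      rw [mnorm_sq]; exact G_norm_bound hR (f θ) g θ
    rw [vnorm_sq, vnorm_sq]
    nlinarith [hcu.le]
  have hGm : ∀ (R : Mat3), AEStronglyMeasurable
      (fun θ => (1/2) * Cb (outer (f θ) (mvmul R e3) + outer g (mvmul R (er θ)))
        (outer (f θ) (mvmul R e3) + outer g (mvmul R (er θ))))
      (volume.restrict (Set.Ioc 0 (2*Real.pi))) := by
    intro R
    exact ((cb_diag_continuous Cb hsymm hlin).comp_aestronglyMeasurable
      (Gmat_aesm hfm R g)).const_mul (1/2)
  have hemp : Set.Ioc (2*Real.pi) 0 = ∅ :=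
    Set.Ioc_eq_empty (by push_neg; positivity)
  have hGint : ∀ (R : Mat3), mmul (mtrans R) R = idM → IntervalIntegrable
      (fun θ => (1/2) * Cb (outer (f θ) (mvmul R e3) + outer g (mvmul R (er θ)))
        (outer (f θ) (mvmul R e3) + outer g (mvmul R (er θ)))) volume 0 (2*Real.pi) := by
    intro R hR
    constructor
    · exact Integrable.mono' hdomi (hGm R) (Filter.Eventually.of_forall (hGb R hR))
    · rw [hemp]; exact integrableOn_empty
  calc (∫ θ in (0:ℝ)..(2*Real.pi),
        (1/2) * Cb (outer (f θ) (mvmul (mmul S Q) e3) + outer g (mvmul (mmul S Q) (er θ)))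
          (outer (f θ) (mvmul (mmul S Q) e3) + outer g (mvmul (mmul S Q) (er θ))))
      ≤ ∫ θ in (0:ℝ)..(2*Real.pi), κ * ((1/2) * Cb (outer (f θ) (mvmul Q e3) + outer g (mvmul Q (er θ)))
          (outer (f θ) (mvmul Q e3) + outer g (mvmul Q (er θ)))) := by
        apply intervalIntegral.integral_mono_on (by positivity) (hGint _ hQ2)
          ((hGint _ hQ).const_mul κ)
        intro x _
        exact hpt x
    _ = κ * ∫ θ in (0:ℝ)..(2*Real.pi), (1/2) * Cb (outer (f θ) (mvmul Q e3) + outer g (mvmul Q (er θ)))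
          (outer (f θ) (mvmul Q e3) + outer g (mvmul Q (er θ))) := by
        rw [← intervalIntegral.integral_const_mul]

include hsymm hlin in
lemma psi0Q_transport (cl cu : ℝ) (hcl : 0 < cl) (hcu : 0 < cu)
    (hbounds : ∀ F, cl * mnorm F ^ 2 ≤ Cb F F ∧ Cb F F ≤ cu * mnorm F ^ 2)
    (b : V3) (hb : b ≠ 0) {S Q : Mat3} (hS : S ∈ SO3) (hQ : Q ∈ SO3) :
    Psi0Q Cb (mmul S Q) b ≤ (1 + Real.sqrt (cu/cl) * mnorm (mtrans S - idM))^2 * Psi0Q Cb Q b := by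
  have hpos : ∀ F, 0 ≤ Cb F F := fun F => le_trans (by positivity) (hbounds F).1
  set κ := (1 + Real.sqrt (cu/cl) * mnorm (mtrans S - idM))^2 with hκdef
  have hκ1 : 1 ≤ κ := by
    rw [hκdef]
    nlinarith [mul_nonneg (Real.sqrt_nonneg (cu/cl)) (mnorm_nonneg (mtrans S - idM))]
  have hκpos : 0 < κ := lt_of_lt_of_le one_pos hκ1
  have hbdd : BddBelow (Qset Cb (mmul S Q) b) :=
    ⟨0, fun x hx => Qset_nonneg Cb hsymm hpos _ _ x hx⟩
  have hne : (Qset Cb Q b).Nonempty := Qset_nonempty Cb Q b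
  have hkey : ∀ E' ∈ Qset Cb Q b, Psi0Q Cb (mmul S Q) b ≤ κ * E' := by
    intro E' hE'
    obtain ⟨E, hEm, hle⟩ := Qset_compare Cb hsymm hlin cl cu hcl hcu hbounds b hb
      hS.1 hQ.1 (SO3_mul_mem hS hQ).1 E' hE'
    exact le_trans (by rw [Psi0Q_eq]; exact csInf_le hbdd hEm) hle
  have h2 : Psi0Q Cb (mmul S Q) b / κ ≤ sInf (Qset Cb Q b) :=
    le_csInf hne fun E' hE' => (div_le_iff₀ hκpos).mpr (by rw [mul_comm]; exact hkey E' hE')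
  calc Psi0Q Cb (mmul S Q) b = (Psi0Q Cb (mmul S Q) b / κ) * κ := by field_simp
    _ ≤ sInf (Qset Cb Q b) * κ := mul_le_mul_of_nonneg_right h2 hκpos.le
    _ = κ * Psi0Q Cb Q b := by rw [mul_comm, Psi0Q_eq]

include hsymm hlin in
lemma psi0Q_zero_zero (Qt : Mat3) (hpos : ∀ F, 0 ≤ Cb F F) : Psi0Q Cb Qt 0 = 0 := by
  have mem0 : (0:ℝ) ∈ Qset Cb Qt 0 := by
    refine ⟨fun _ => (0:V3), 0, ?_, by simp, ?_⟩
    · have h : (fun θ : ℝ => vnorm ((0:V3)) ^ 2) = fun _ => (0:ℝ) := by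
        funext θ
        have : vnorm (0:V3) = 0 := by simp [vnorm]
        rw [this]; norm_num
      rw [h]
      exact integrableOn_zero
    · have h : ∀ θ : ℝ, outer ((0:V3)) (mvmul Qt e3) + outer (0:V3) (mvmul Qt (er θ)) = 0 := by
        intro θ
        funext i j
        simp [outer]
      symm
      rw [show (fun θ => (1/2) * Cb (outer ((fun _ => (0:V3)) θ) (mvmul Qt e3) + outer (0:V3) (mvmul Qt (er θ)))
          (outer ((fun _ => (0:V3)) θ) (mvmul Qt e3) + outer (0:V3) (mvmul Qt (er θ)))) = fun _ : ℝ => (0:ℝ) from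
        funext fun θ => by rw [h θ, cb_zero Cb hlin]; norm_num]
      simp
  rw [Psi0Q_eq]
  refine le_antisymm (csInf_le ⟨0, fun x hx => Qset_nonneg Cb hsymm hpos _ _ x hx⟩ mem0)
    (le_csInf ⟨0, mem0⟩ fun x hx => Qset_nonneg Cb hsymm hpos _ _ x hx)

end FINAL


set_option maxHeartbeats 1600000 in
theorem stmt16 (Cb : Mat3 → Mat3 → ℝ)
    (hsymm : ∀ F G, Cb F G = Cb G F)
    (hlin : ∀ F, IsLinearMap ℝ (Cb F))
    (cl cu : ℝ) (hcl : 0 < cl) (hcu : 0 < cu)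
    (hbounds : ∀ F, cl * mnorm F ^ 2 ≤ Cb F F ∧ Cb F F ≤ cu * mnorm F ^ 2) :
    ∃ c : ℝ, 0 < c ∧ ∀ b t t' : V3, vnorm t = 1 → vnorm t' = 1 →
      Psi0 Cb b t ≤ (1 + c * vnorm (t - t')) * Psi0 Cb b t' := by
  have hpos : ∀ F, 0 ≤ Cb F F := fun F => le_trans (by positivity) (hbounds F).1
  set K := Real.sqrt (cu/cl) with hKdef
  have hK0 : 0 < K := Real.sqrt_pos.2 (by positivity)
  refine ⟨5*K + 12*K^2, by positivity, ?_⟩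
  intro b t t' ht ht'
  have ht3 : t 0^2 + t 1^2 + t 2^2 = 1 := by
    have h := vnorm_sq t
    rw [ht, one_pow, Fin.sum_univ_three] at h
    linarith
  have ht3' : t' 0^2 + t' 1^2 + t' 2^2 = 1 := by
    have h := vnorm_sq t'
    rw [ht', one_pow, Fin.sum_univ_three] at h
    linarith
  have he3 : e3 0^2 + e3 1^2 + e3 2^2 = 1 := by norm_num [e3]; simp
  set r := vnorm (t - t') with hrdef
  have hr0 : 0 ≤ r := vnorm_nonneg _
  have hrsq : r^2 = (t 0 - t' 0)^2 + (t 1 - t' 1)^2 + (t 2 - t' 2)^2 := by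
    rw [hrdef, vnorm_sq, Fin.sum_univ_three]
    simp [Pi.sub_apply]
  have hrle2 : r ≤ 2 := by
    have h4 : r^2 ≤ 4 := by
      nlinarith [sq_nonneg (t 0 + t' 0), sq_nonneg (t 1 + t' 1), sq_nonneg (t 2 + t' 2)]
    nlinarith [h4, hr0]
  have hfac : (0:ℝ) < 1 + (5*K + 12*K^2) * r := by positivity
  -- nonnegativity of Tset elements
  have hTnonneg : ∀ (bb tt : V3), ∀ E ∈ Tset Cb bb tt, (0:ℝ) ≤ E := by
    rintro bb tt E ⟨Q, hQ, hmap, rfl⟩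
    rw [Psi0Q_eq]
    exact Real.sInf_nonneg fun x hx => Qset_nonneg Cb hsymm hpos _ _ x hx
  by_cases hb : b = 0
  · subst hb
    obtain ⟨Q0, hQ0, hQ0map, -⟩ := exists_rot e3 t he3 ht3
    have hL : Psi0 Cb 0 t = 0 := by
      rw [Psi0_eq]
      have mem0 : (0:ℝ) ∈ Tset Cb 0 t :=
        ⟨Q0, hQ0, hQ0map, (psi0Q_zero_zero Cb hsymm hlin Q0 hpos).symm⟩
      exact le_antisymm (csInf_le ⟨0, fun x hx => hTnonneg 0 t x hx⟩ mem0)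
        (le_csInf ⟨0, mem0⟩ fun x hx => hTnonneg 0 t x hx)
    rw [hL]
    have hR : 0 ≤ Psi0 Cb 0 t' := by
      rw [Psi0_eq]
      exact Real.sInf_nonneg fun x hx => hTnonneg 0 t' x hx
    exact mul_nonneg hfac.le hR
  · obtain ⟨Q', hQ'mem, hQ'map, -⟩ := exists_rot e3 t' he3 ht3'
    obtain ⟨S, hSmem, hSmap, hSnorm⟩ := exists_rot t' t ht3' ht3
    set m := mnorm (mtrans S - idM) with hmdef
    have hm0 : 0 ≤ m := mnorm_nonneg _
    have hmsq : m^2 ≤ 6 * r^2 := by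
      have h1 : m^2 = ∑ i, ∑ j, (mtrans S i j - idM i j)^2 := by
        rw [hmdef, mnorm_sq]
        refine Finset.sum_congr rfl fun i _ => Finset.sum_congr rfl fun j _ => ?_
        simp [Pi.sub_apply]
      rw [h1, hrsq]
      calc ∑ i, ∑ j, (mtrans S i j - idM i j)^2 ≤ 6 * ∑ i, (t i - t' i)^2 := hSnorm
        _ = 6 * ((t 0 - t' 0)^2 + (t 1 - t' 1)^2 + (t 2 - t' 2)^2) := by
            rw [Fin.sum_univ_three]
    have hκle : (1 + K*m)^2 ≤ 1 + (5*K + 12*K^2)*r := by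
      have hm52 : m ≤ 5/2 * r := by nlinarith [hmsq, hm0, hr0]
      have hr2r : r^2 ≤ 2*r := by nlinarith [hrle2, hr0]
      have e1 : 2*K*m ≤ 5*K*r := by nlinarith [mul_le_mul_of_nonneg_left hm52 (by positivity : (0:ℝ) ≤ 2*K)]
      have e2 : K^2*m^2 ≤ 12*K^2*r := by
        nlinarith [mul_le_mul_of_nonneg_left hmsq (sq_nonneg K),
          mul_le_mul_of_nonneg_left hr2r (by positivity : (0:ℝ) ≤ 6*K^2)]
      nlinarith [e1, e2]
    have hTne : (Tset Cb b t').Nonempty := ⟨Psi0Q Cb Q' b, Q', hQ'mem, hQ'map, rfl⟩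
    have hkey : ∀ E' ∈ Tset Cb b t', Psi0 Cb b t ≤ (1 + (5*K + 12*K^2)*r) * E' := by
      rintro E' ⟨Q, hQmem, hQmap, rfl⟩
      have h1 : Psi0 Cb b t ≤ Psi0Q Cb (mmul S Q) b := by
        rw [Psi0_eq]
        exact csInf_le ⟨0, fun x hx => hTnonneg b t x hx⟩
          ⟨mmul S Q, SO3_mul_mem hSmem hQmem, by rw [mvmul_mmul, hQmap, hSmap], rfl⟩
      have h2 : Psi0Q Cb (mmul S Q) b ≤ (1 + K*m)^2 * Psi0Q Cb Q b := by
        have := psi0Q_transport Cb hsymm hlin cl cu hcl hcu hbounds b hb hSmem hQmem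
        rw [hKdef, hmdef]
        exact this
      have h3 : 0 ≤ Psi0Q Cb Q b := by
        rw [Psi0Q_eq]
        exact Real.sInf_nonneg fun x hx => Qset_nonneg Cb hsymm hpos _ _ x hx
      calc Psi0 Cb b t ≤ (1 + K*m)^2 * Psi0Q Cb Q b := le_trans h1 h2
        _ ≤ (1 + (5*K + 12*K^2)*r) * Psi0Q Cb Q b := mul_le_mul_of_nonneg_right hκle h3
    have hdiv : Psi0 Cb b t / (1 + (5*K + 12*K^2)*r) ≤ sInf (Tset Cb b t') :=
      le_csInf hTne fun E' hE' => (div_le_iff₀ hfac).mpr (by rw [mul_comm]; exact hkey E' hE')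
    calc Psi0 Cb b t = (Psi0 Cb b t / (1 + (5*K + 12*K^2)*r)) * (1 + (5*K + 12*K^2)*r) := by
          field_simp
      _ ≤ sInf (Tset Cb b t') * (1 + (5*K + 12*K^2)*r) := mul_le_mul_of_nonneg_right hdiv hfac.le
      _ = (1 + (5*K + 12*K^2)*r) * Psi0 Cb b t' := by rw [mul_comm, Psi0_eq]
end
end
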